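/- arXiv:2306.01796 — 11 statements merged into one kernel-verified Lean document; each statement's English description precedes it below -/
import Mathlib

section
/- Assume F is L-Lipschitz on Z and satisfies the error bound dist(z, Z*) ≤ (C̄/σ)·‖z − Π_Z(z − σF(z))‖ for all z ∈ Z and all σ > 0. Let α ∈ [0, 1), γ ∈ (0, 1), τ = γ·√(1−α)/L, and θ ∈ [0, 1]. Fix z, w ∈ Z, set z̄ = αz + (1−α)w and u = Π_Z(z̄ − τF(w)). Then τ²·(αL²/(6C̄²αL² + 8))·dist^θ_{Z*}(z, w) ≤ α‖z − u‖² + (1 − α)‖w − u‖². -/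
/-!
Write `a = ‖z - u‖`, `b = ‖w - u‖` and `R = α a² + (1 - α) b²`. Since `u = Π_Z(z̄ - τ F w)`,
nonexpansiveness of `Π_Z` and the Lipschitz bound give the residual estimate
`‖u - Π_Z(u - τ F u)‖ ≤ ‖z̄ - u‖ + τ L b ≤ α a + (1 - α + τ L) b`, so the error bound yields
a solution `z*` with `τ ‖u - z*‖ ≤ C̄ (α a + (1 - α + τ L) b)`. As `τ L ≤ √(1 - α)`, a weighted
Cauchy–Schwarz inequality turns this into `τ² ‖u - z*‖² ≤ 4 C̄² R`. Finally `Φ^θ_{z*}(z, w)` is at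
most `3 a² + 3 b² + (3/2) ‖u - z*‖²` by the triangle inequality through `u`.
-/

open Metric

/-- Weighted squared distance `Φ^θ_u(z,w) = θ‖z−u‖² + (1−θ)‖w−u‖²`, minimized over
`u` ranging in the solution set `Zstar`. -/
noncomputable def distTheta {V : Type*} [NormedAddCommGroup V] [InnerProductSpace ℝ V]
    (Zstar : Set V) (θ : ℝ) (z w : V) : ℝ :=
  sInf ((fun zs => θ * ‖z - zs‖ ^ 2 + (1 - θ) * ‖w - zs‖ ^ 2) '' Zstar)

section Projection

variable {V : Type*} [NormedAddCommGroup V] [InnerProductSpace ℝ V] {Z : Set V} {P : V → V}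

theorem lipschitzWith_one_of_inner_sub_le_zero (hmem : ∀ x, P x ∈ Z)
    (hP : ∀ x, ∀ y ∈ Z, inner ℝ (x - P x) (y - P x) ≤ 0) : LipschitzWith 1 P := by
  refine LipschitzWith.of_dist_le_mul fun x y => ?_
  simp only [NNReal.coe_one, one_mul, dist_eq_norm]
  have hx := hP x (P y) (hmem y)
  have hy := hP y (P x) (hmem x)
  have key : ‖P x - P y‖ ^ 2 ≤ ‖x - y‖ * ‖P x - P y‖ := by
    have hsum : ‖P x - P y‖ ^ 2 ≤ inner ℝ (x - y) (P x - P y) := by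
      rw [← real_inner_self_eq_norm_sq]
      simp only [inner_sub_left, inner_sub_right] at hx hy ⊢
      linarith [real_inner_comm (P x) (P y), real_inner_comm x (P y), real_inner_comm y (P x)]
    exact hsum.trans (real_inner_le_norm _ _)
  nlinarith [norm_nonneg (P x - P y), norm_nonneg (x - y)]

theorem norm_natural_residual_le (hmem : ∀ x, P x ∈ Z)
    (hP : ∀ x, ∀ y ∈ Z, inner ℝ (x - P x) (y - P x) ≤ 0) {F : V → V} {τ : ℝ} (hτ : 0 ≤ τ)
    {v w u : V} (hu : u = P (v - τ • F w)) :
    ‖u - P (u - τ • F u)‖ ≤ ‖v - u‖ + τ * ‖F u - F w‖ := by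
  calc ‖u - P (u - τ • F u)‖
      ≤ ‖(v - τ • F w) - (u - τ • F u)‖ := by
        nth_rw 1 [hu]
        simpa using (lipschitzWith_one_of_inner_sub_le_zero hmem hP).norm_sub_le
          (v - τ • F w) (u - τ • F u)
    _ = ‖(v - u) + τ • (F u - F w)‖ := by congr 1; module
    _ ≤ ‖v - u‖ + τ * ‖F u - F w‖ := by
        grw [norm_add_le, norm_smul, Real.norm_of_nonneg hτ]

end Projection

theorem norm_smul_add_smul_sub_le {V : Type*} [NormedAddCommGroup V] [NormedSpace ℝ V]
    {α : ℝ} (hα0 : 0 ≤ α) (hα1 : α ≤ 1) (z w u : V) :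
    ‖α • z + (1 - α) • w - u‖ ≤ α * ‖z - u‖ + (1 - α) * ‖w - u‖ := by
  calc ‖α • z + (1 - α) • w - u‖ = ‖α • (z - u) + (1 - α) • (w - u)‖ := by congr 1; module
    _ ≤ α * ‖z - u‖ + (1 - α) * ‖w - u‖ := by
        grw [norm_add_le, norm_smul, norm_smul, Real.norm_of_nonneg hα0,
          Real.norm_of_nonneg (sub_nonneg.2 hα1)]

theorem sq_weighted_add_le {α t a b : ℝ} (hα0 : 0 ≤ α) (hα1 : α < 1) (ht0 : 0 ≤ t)
    (ht : t ≤ Real.sqrt (1 - α)) :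
    (α * a + (1 - α + t) * b) ^ 2 ≤ 4 * (α * a ^ 2 + (1 - α) * b ^ 2) := by
  set s := Real.sqrt (1 - α)
  have hβ : 0 < 1 - α := by linarith
  have hs2 : s ^ 2 = 1 - α := Real.sq_sqrt hβ.le
  have hs1 : s ≤ 1 := Real.sqrt_le_one.2 (by linarith)
  -- weighted Cauchy–Schwarz with weights `α` and `1 - α`
  have hCS : (α * a + (1 - α + t) * b) ^ 2 * (1 - α)
      ≤ (α * (1 - α) + (1 - α + t) ^ 2) * (α * a ^ 2 + (1 - α) * b ^ 2) := by
    nlinarith [mul_nonneg hα0 (sq_nonneg ((1 - α + t) * a - (1 - α) * b))]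
  have hcoef : α * (1 - α) + (1 - α + t) ^ 2 ≤ 4 * (1 - α) := by
    have hc : 1 - α + t ≤ s ^ 2 + s := by linarith
    have hc2 : (1 - α + t) ^ 2 ≤ (s ^ 2 + s) ^ 2 := pow_le_pow_left₀ (by linarith) hc 2
    nlinarith [Real.sqrt_nonneg (1 - α)]
  have hR : 0 ≤ α * a ^ 2 + (1 - α) * b ^ 2 := by positivity
  nlinarith [mul_le_mul_of_nonneg_right hcoef hR]

theorem sq_mul_div_mul_le_of_bounds {α τ L C X a b d : ℝ} (hα0 : 0 ≤ α) (hα1 : α ≤ 1)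
    (hτL : τ ^ 2 * L ^ 2 ≤ 1 - α) (hX : X ≤ 3 * a ^ 2 + 3 * b ^ 2 + 3 / 2 * d ^ 2)
    (hd : τ ^ 2 * d ^ 2 ≤ 4 * C ^ 2 * (α * a ^ 2 + (1 - α) * b ^ 2)) :
    τ ^ 2 * (α * L ^ 2 / (6 * C ^ 2 * α * L ^ 2 + 8)) * X ≤ α * a ^ 2 + (1 - α) * b ^ 2 := by
  set R := α * a ^ 2 + (1 - α) * b ^ 2
  have hβ : 0 ≤ 1 - α := by linarith
  have hR : 0 ≤ R := by positivity
  have hab : α * (1 - α) * (3 * a ^ 2 + 3 * b ^ 2) ≤ 3 * R := by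
    nlinarith [mul_nonneg (sq_nonneg α) (sq_nonneg a), mul_nonneg (sq_nonneg (1 - α)) (sq_nonneg b)]
  have hD : 0 < 6 * C ^ 2 * α * L ^ 2 + 8 := by positivity
  rw [show τ ^ 2 * (α * L ^ 2 / (6 * C ^ 2 * α * L ^ 2 + 8)) * X
      = τ ^ 2 * α * L ^ 2 * X / (6 * C ^ 2 * α * L ^ 2 + 8) by ring, div_le_iff₀ hD]
  calc τ ^ 2 * α * L ^ 2 * X
      ≤ τ ^ 2 * α * L ^ 2 * (3 * a ^ 2 + 3 * b ^ 2 + 3 / 2 * d ^ 2) := by grw [hX]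
    _ = α * (τ ^ 2 * L ^ 2) * (3 * a ^ 2 + 3 * b ^ 2) + 3 / 2 * α * L ^ 2 * (τ ^ 2 * d ^ 2) := by
        ring
    _ ≤ α * (1 - α) * (3 * a ^ 2 + 3 * b ^ 2) + 3 / 2 * α * L ^ 2 * (4 * C ^ 2 * R) := by
        grw [hτL, hd]
    _ ≤ R * (6 * C ^ 2 * α * L ^ 2 + 8) := by nlinarith

section DistTheta

variable {V : Type*} [NormedAddCommGroup V] [InnerProductSpace ℝ V] {Zstar : Set V} {θ : ℝ}

theorem distTheta_le_of_mem (hθ0 : 0 ≤ θ) (hθ1 : θ ≤ 1) {zs : V} (hzs : zs ∈ Zstar)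
    (z w : V) : distTheta Zstar θ z w ≤ θ * ‖z - zs‖ ^ 2 + (1 - θ) * ‖w - zs‖ ^ 2 := by
  refine csInf_le ⟨0, ?_⟩ ⟨zs, hzs, rfl⟩
  rintro _ ⟨p, -, rfl⟩
  have : 0 ≤ 1 - θ := by linarith
  positivity

theorem distTheta_le_triangle (hθ0 : 0 ≤ θ) (hθ1 : θ ≤ 1) {zs : V} (hzs : zs ∈ Zstar)
    (z w u : V) :
    distTheta Zstar θ z w ≤ 3 * ‖z - u‖ ^ 2 + 3 * ‖w - u‖ ^ 2 + 3 / 2 * ‖u - zs‖ ^ 2 := by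
  have hsq : ∀ x : V, ‖x - zs‖ ^ 2 ≤ 3 * ‖x - u‖ ^ 2 + 3 / 2 * ‖u - zs‖ ^ 2 := fun x => by
    have h := norm_sub_le_norm_sub_add_norm_sub x u zs
    nlinarith [norm_nonneg (x - zs), sq_nonneg (2 * ‖x - u‖ - ‖u - zs‖)]
  have hz := mul_le_mul_of_nonneg_left (hsq z) hθ0
  have hw := mul_le_mul_of_nonneg_left (hsq w) (sub_nonneg.2 hθ1)
  have : 0 ≤ (1 - θ) * ‖z - u‖ ^ 2 + θ * ‖w - u‖ ^ 2 := by
    have : 0 ≤ 1 - θ := by linarith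
    positivity
  linarith [distTheta_le_of_mem hθ0 hθ1 hzs z w]

end DistTheta

theorem stmt_1_general
    {V : Type*} [NormedAddCommGroup V] [InnerProductSpace ℝ V] [FiniteDimensional ℝ V]
    (Z : Set V)
    (projZ : V → V)
    (hprojmem : ∀ x, projZ x ∈ Z)
    (hproj : ∀ x, ∀ y ∈ Z, (inner ℝ (x - projZ x) (y - projZ x) : ℝ) ≤ 0)
    (F : V → V) (L : ℝ) (hL : 0 < L)
    (hlip : ∀ z₁ ∈ Z, ∀ z₂ ∈ Z, ‖F z₁ - F z₂‖ ≤ L * ‖z₁ - z₂‖)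
    (Zstar : Set V)
    (hZstarNe : Zstar.Nonempty) (hZstarClosed : IsClosed Zstar)
    (C : ℝ) (hC : 0 < C)
    (heb : ∀ z ∈ Z, ∀ σ : ℝ, 0 < σ →
      infDist z Zstar ≤ (C / σ) * ‖z - projZ (z - σ • F z)‖)
    (α γ τ θ : ℝ) (hα0 : 0 ≤ α) (hα1 : α < 1) (hγ0 : 0 < γ) (hγ1 : γ < 1)
    (hτ : τ = γ * Real.sqrt (1 - α) / L) (hθ0 : 0 ≤ θ) (hθ1 : θ ≤ 1)
    (z w zbar u : V) (hw : w ∈ Z)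
    (hzbar : zbar = α • z + (1 - α) • w)
    (hu : u = projZ (zbar - τ • F w)) :
    τ ^ 2 * (α * L ^ 2 / (6 * C ^ 2 * α * L ^ 2 + 8)) * distTheta Zstar θ z w
      ≤ α * ‖z - u‖ ^ 2 + (1 - α) * ‖w - u‖ ^ 2 := by
  have hβ : 0 < 1 - α := by linarith
  have hτ0 : 0 < τ := by rw [hτ]; have := Real.sqrt_pos.2 hβ; positivity
  have hτL : τ * L ≤ Real.sqrt (1 - α) := by
    rw [hτ, div_mul_cancel₀ _ hL.ne']; nlinarith [Real.sqrt_nonneg (1 - α)]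
  have huZ : u ∈ Z := hu ▸ hprojmem _
  set a := ‖z - u‖
  set b := ‖w - u‖
  obtain ⟨zs, hzs, hd⟩ := hZstarClosed.exists_infDist_eq_dist hZstarNe u
  have hres : ‖u - projZ (u - τ • F u)‖ ≤ α * a + (1 - α + τ * L) * b := by
    calc ‖u - projZ (u - τ • F u)‖ ≤ ‖zbar - u‖ + τ * ‖F u - F w‖ :=
          norm_natural_residual_le hprojmem hproj hτ0.le hu
      _ ≤ (α * a + (1 - α) * b) + τ * (L * b) := by
          grw [hzbar, norm_smul_add_smul_sub_le hα0 hα1.le, hlip u huZ w hw, norm_sub_rev u w]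
      _ = α * a + (1 - α + τ * L) * b := by ring
  have hdist : τ * ‖u - zs‖ ≤ C * (α * a + (1 - α + τ * L) * b) := by
    rw [← dist_eq_norm, ← hd]
    calc τ * infDist u Zstar ≤ τ * ((C / τ) * ‖u - projZ (u - τ • F u)‖) := by
          grw [heb u huZ τ hτ0]
      _ = C * ‖u - projZ (u - τ • F u)‖ := by field_simp
      _ ≤ C * (α * a + (1 - α + τ * L) * b) := by grw [hres]
  have hdist_sq : τ ^ 2 * ‖u - zs‖ ^ 2 ≤ 4 * C ^ 2 * (α * a ^ 2 + (1 - α) * b ^ 2) := by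
    have h := pow_le_pow_left₀ (by positivity) hdist 2
    have hCS := sq_weighted_add_le (a := a) (b := b) hα0 hα1 (by positivity) hτL
    nlinarith
  have hτL_sq : τ ^ 2 * L ^ 2 ≤ 1 - α := by
    have := pow_le_pow_left₀ (by positivity) hτL 2
    rwa [Real.sq_sqrt hβ.le, mul_pow] at this
  exact sq_mul_div_mul_le_of_bounds hα0 hα1.le hτL_sq
    (distTheta_le_triangle hθ0 hθ1 hzs z w u) hdist_sq

/-- error bound in terms of the algorithm's iterates (Lemma 2). -/
theorem stmt_1
    {V : Type*} [NormedAddCommGroup V] [InnerProductSpace ℝ V] [FiniteDimensional ℝ V]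
    (Z : Set V) (hZne : Z.Nonempty) (hZcpt : IsCompact Z) (hZconv : Convex ℝ Z)
    (projZ : V → V)
    (hprojmem : ∀ x, projZ x ∈ Z)
    (hproj : ∀ x, ∀ y ∈ Z, (inner ℝ (x - projZ x) (y - projZ x) : ℝ) ≤ 0)
    (F : V → V) (L : ℝ) (hL : 0 < L)
    (hmono : ∀ z₁ ∈ Z, ∀ z₂ ∈ Z, (0 : ℝ) ≤ inner ℝ (F z₁ - F z₂) (z₁ - z₂))
    (hlip : ∀ z₁ ∈ Z, ∀ z₂ ∈ Z, ‖F z₁ - F z₂‖ ≤ L * ‖z₁ - z₂‖)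
    (Zstar : Set V)
    (hZstar : Zstar = {zs ∈ Z | ∀ z ∈ Z, (0 : ℝ) ≤ inner ℝ (F zs) (z - zs)})
    (hZstarNe : Zstar.Nonempty) (hZstarClosed : IsClosed Zstar)
    (C : ℝ) (hC : 0 < C)
    (heb : ∀ z ∈ Z, ∀ σ : ℝ, 0 < σ →
      infDist z Zstar ≤ (C / σ) * ‖z - projZ (z - σ • F z)‖)
    (α γ τ θ : ℝ) (hα0 : 0 ≤ α) (hα1 : α < 1) (hγ0 : 0 < γ) (hγ1 : γ < 1)
    (hτ : τ = γ * Real.sqrt (1 - α) / L) (hθ0 : 0 ≤ θ) (hθ1 : θ ≤ 1)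
    (z w zbar u : V) (hz : z ∈ Z) (hw : w ∈ Z)
    (hzbar : zbar = α • z + (1 - α) • w)
    (hu : u = projZ (zbar - τ • F w)) :
    τ ^ 2 * (α * L ^ 2 / (6 * C ^ 2 * α * L ^ 2 + 8)) * distTheta Zstar θ z w
      ≤ α * ‖z - u‖ ^ 2 + (1 - α) * ‖w - u‖ ^ 2 :=
  stmt_1_general Z projZ hprojmem hproj F L hL hlip Zstar hZstarNe hZstarClosed C hC heb α γ τ θ hα0
    hα1 hγ0 hγ1 hτ hθ0 hθ1 z w zbar u hw hzbar hu
end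

section
/- Let α ∈ [0, 1), γ ∈ (0, 1), and 0 < τ ≤ γ·√(1−α)/L. Fix z, w ∈ Z, set z̄ = αz + (1−α)w, u = Π_Z(z̄ − τF(w)), and for each ω ∈ Ω let z⁺(ω) = Π_Z(z̄ − τ·(F(w) + F_ω(u) − F_ω(w))). Then for every z* ∈ Z*: ∫_Ω ‖z⁺(ω) − z*‖² dμ(ω) ≤ α‖z − z*‖² + (1 − α)‖w − z*‖² − ((1 − α) − τ²L²/γ)·‖u − w‖² − α‖z − u‖². -/
/-!
With `g(ω) = F w + F_ω u − F_ω w`, the projection inequalities for `u` (tested at `z⁺(ω)`) and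
for `z⁺(ω)` (tested at `z*`), combined with Young's inequality, give pointwise
`‖z⁺(ω) − z*‖² ≤ ‖z̄ − z*‖² − ‖z̄ − u‖² + τ²‖F_ω u − F_ω w‖² − 2τ⟪g(ω), u − z*⟫`.
In expectation `g` averages to `F u`, and `⟪F u, u − z*⟫ ≥ 0` by monotonicity and the variational
inequality at `z*`; the variance term is at most `τ²L²‖u − w‖² ≤ τ²L²‖u − w‖²/γ`. Expanding
`‖z̄ − x‖²` for the convex combination `z̄ = αz + (1 − α)w` gives the bound.
-/

open MeasureTheory
open scoped RealInnerProductSpace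

section InnerProductSpace

variable {V : Type*} [NormedAddCommGroup V] [InnerProductSpace ℝ V]

theorem norm_smul_add_one_sub_smul_sub_sq (α : ℝ) (z w x : V) :
    ‖α • z + (1 - α) • w - x‖ ^ 2
      = α * ‖z - x‖ ^ 2 + (1 - α) * ‖w - x‖ ^ 2 - α * (1 - α) * ‖z - w‖ ^ 2 := by
  have hzw : ‖z - w‖ ^ 2 = ‖z - x‖ ^ 2 - 2 * ⟪z - x, w - x⟫ + ‖w - x‖ ^ 2 := by
    rw [show z - w = (z - x) - (w - x) by abel, norm_sub_sq_real]
  rw [show α • z + (1 - α) • w - x = α • (z - x) + (1 - α) • (w - x) by module,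
    norm_add_sq_real, real_inner_smul_left, real_inner_smul_right, norm_smul, norm_smul,
    mul_pow, mul_pow, Real.norm_eq_abs, Real.norm_eq_abs, sq_abs, sq_abs]
  linear_combination α * (1 - α) * hzw

theorem norm_sub_sq_le_of_inner_step_sub_nonpos {x q y v : V} {τ : ℝ}
    (h : ⟪x - τ • v - q, y - q⟫ ≤ 0) :
    ‖q - y‖ ^ 2 ≤ ‖x - y‖ ^ 2 - ‖x - q‖ ^ 2 - 2 * τ * ⟪v, q - y⟫ := by
  rw [show x - τ • v - q = (x - q) - τ • v by abel, show y - q = -(q - y) by abel,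
    inner_neg_right, inner_sub_left, real_inner_smul_left] at h
  have hsplit := norm_add_sq_real (x - q) (q - y)
  rw [show x - q + (q - y) = x - y by abel] at hsplit
  linarith

theorem norm_extragradient_sub_sq_le {a u p y v d : V} {τ : ℝ}
    (hu : ⟪a - τ • v - u, p - u⟫ ≤ 0) (hp : ⟪a - τ • (v + d) - p, y - p⟫ ≤ 0) :
    ‖p - y‖ ^ 2
      ≤ ‖a - y‖ ^ 2 - ‖a - u‖ ^ 2 + τ ^ 2 * ‖d‖ ^ 2 - 2 * τ * ⟪v + d, u - y⟫ := by
  have hpy := norm_sub_sq_le_of_inner_step_sub_nonpos hp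
  have hup := norm_sub_sq_le_of_inner_step_sub_nonpos hu
  have young : 0 ≤ ‖τ • d - (u - p)‖ ^ 2 := sq_nonneg _
  rw [norm_sub_sq_real, norm_smul, mul_pow, Real.norm_eq_abs, sq_abs,
    real_inner_smul_left] at young
  have hsplit : ⟪v + d, p - y⟫ = ⟪v + d, u - y⟫ - ⟪v, u - p⟫ - ⟪d, u - p⟫ := by
    rw [show p - y = (u - y) - (u - p) by abel, inner_sub_right, inner_add_left, inner_add_left]
    ring
  rw [hsplit] at hpy
  linarith

end InnerProductSpace

section Expectation

variable {V Ω : Type*} [NormedAddCommGroup V] [InnerProductSpace ℝ V] [CompleteSpace V]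
  [MeasurableSpace Ω] {P : Measure Ω} [IsProbabilityMeasure P]

theorem integral_const_add_sub (c : V) {X Y : Ω → V} (hX : Integrable X P)
    (hY : Integrable Y P) : ∫ ω, (c + (X ω - Y ω)) ∂P = c + (∫ ω, X ω ∂P - ∫ ω, Y ω ∂P) := by
  have hXY : Integrable (fun ω => X ω - Y ω) P := hX.sub hY
  rw [integral_add (integrable_const c) hXY, integral_sub hX hY, integral_const,
    probReal_univ, one_smul]

theorem integral_le_of_le_add_sub_inner {f X : Ω → ℝ} {G : Ω → V} {c a b : ℝ} {v : V}
    (hf : ∀ ω, 0 ≤ f ω) (hX : Integrable X P) (hG : Integrable G P)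
    (h : ∀ ω, f ω ≤ c + a * X ω - b * ⟪G ω, v⟫) :
    ∫ ω, f ω ∂P ≤ c + a * ∫ ω, X ω ∂P - b * ⟪∫ ω, G ω ∂P, v⟫ := by
  have hcX : Integrable (fun ω => c + a * X ω) P := (integrable_const c).add (hX.const_mul a)
  have hGv : Integrable (fun ω => b * ⟪G ω, v⟫) P := (hG.inner_const v).const_mul b
  have hinner : ∫ ω, ⟪G ω, v⟫ ∂P = ⟪∫ ω, G ω ∂P, v⟫ := by
    rw [real_inner_comm, ← integral_inner hG]
    simp only [real_inner_comm v]
  calc ∫ ω, f ω ∂P ≤ ∫ ω, (c + a * X ω - b * ⟪G ω, v⟫) ∂P :=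
        integral_mono_of_nonneg (ae_of_all _ hf) (hcX.sub hGv) (ae_of_all _ h)
    _ = c + a * ∫ ω, X ω ∂P - b * ⟪∫ ω, G ω ∂P, v⟫ := by
        rw [integral_sub hcX hGv, integral_add (integrable_const c) (hX.const_mul a),
          integral_const, integral_const_mul, integral_const_mul, hinner, probReal_univ,
          one_smul]

end Expectation

theorem stmt_2_general
    {V : Type*} [NormedAddCommGroup V] [InnerProductSpace ℝ V] [FiniteDimensional ℝ V]
    (Z : Set V)
    (projZ : V → V)
    (hprojmem : ∀ x, projZ x ∈ Z)
    (hproj : ∀ x, ∀ y ∈ Z, (inner ℝ (x - projZ x) (y - projZ x) : ℝ) ≤ 0)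
    (F : V → V) (L : ℝ)
    (hmono : ∀ z₁ ∈ Z, ∀ z₂ ∈ Z, (0 : ℝ) ≤ inner ℝ (F z₁ - F z₂) (z₁ - z₂))
    (Zstar : Set V)
    (hZstar : Zstar = {zs ∈ Z | ∀ z ∈ Z, (0 : ℝ) ≤ inner ℝ (F zs) (z - zs)})
    {Ω : Type*} [MeasurableSpace Ω] (P : Measure Ω) [IsProbabilityMeasure P]
    (Fo : Ω → V → V)
    (hFint : ∀ x ∈ Z, Integrable (fun ω => Fo ω x) P)
    (hunb : ∀ x ∈ Z, ∫ ω, Fo ω x ∂P = F x)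
    (hsqint : ∀ x ∈ Z, ∀ y ∈ Z, Integrable (fun ω => ‖Fo ω x - Fo ω y‖ ^ 2) P)
    (hlipmean : ∀ x ∈ Z, ∀ y ∈ Z,
      ∫ ω, ‖Fo ω x - Fo ω y‖ ^ 2 ∂P ≤ L ^ 2 * ‖x - y‖ ^ 2)
    (α γ τ : ℝ) (hγ0 : 0 < γ) (hγ1 : γ < 1)
    (hτ0 : 0 < τ)
    (z w zbar u : V) (hw : w ∈ Z)
    (hzbar : zbar = α • z + (1 - α) • w)
    (hu : u = projZ (zbar - τ • F w))
    (zp : Ω → V)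
    (hzp : ∀ ω, zp ω = projZ (zbar - τ • (F w + Fo ω u - Fo ω w))) :
    ∀ zs ∈ Zstar,
      ∫ ω, ‖zp ω - zs‖ ^ 2 ∂P
        ≤ α * ‖z - zs‖ ^ 2 + (1 - α) * ‖w - zs‖ ^ 2
          - ((1 - α) - τ ^ 2 * L ^ 2 / γ) * ‖u - w‖ ^ 2 - α * ‖z - u‖ ^ 2 := by
  intro zs hzs
  rw [hZstar] at hzs
  obtain ⟨hzsZ, hvi⟩ := hzs
  have huZ : u ∈ Z := hu ▸ hprojmem _
  have hstep : ∀ ω, ‖zp ω - zs‖ ^ 2 ≤ ‖zbar - zs‖ ^ 2 - ‖zbar - u‖ ^ 2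
      + τ ^ 2 * ‖Fo ω u - Fo ω w‖ ^ 2 - 2 * τ * ⟪F w + (Fo ω u - Fo ω w), u - zs⟫ := by
    intro ω
    have hp := hproj (zbar - τ • (F w + Fo ω u - Fo ω w)) zs hzsZ
    rw [← hzp, add_sub_assoc] at hp
    exact norm_extragradient_sub_sq_le (hu ▸ hproj _ _ (hzp ω ▸ hprojmem _)) hp
  have hg : Integrable (fun ω => F w + (Fo ω u - Fo ω w)) P :=
    (integrable_const (F w)).add ((hFint u huZ).sub (hFint w hw))
  have hmean :=
    integral_le_of_le_add_sub_inner (fun ω => sq_nonneg _) (hsqint u huZ w hw) hg hstep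
  rw [integral_const_add_sub _ (hFint u huZ) (hFint w hw), hunb u huZ, hunb w hw,
    add_sub_cancel] at hmean
  have hFu : 0 ≤ ⟪F u, u - zs⟫ := by
    have := hmono u huZ zs hzsZ
    rw [inner_sub_left] at this
    linarith [hvi u huZ]
  have hvar : τ ^ 2 * ∫ ω, ‖Fo ω u - Fo ω w‖ ^ 2 ∂P ≤ τ ^ 2 * L ^ 2 / γ * ‖u - w‖ ^ 2 :=
    calc τ ^ 2 * ∫ ω, ‖Fo ω u - Fo ω w‖ ^ 2 ∂P ≤ τ ^ 2 * (L ^ 2 * ‖u - w‖ ^ 2) := by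
          gcongr; exact hlipmean u huZ w hw
      _ ≤ τ ^ 2 * (L ^ 2 * ‖u - w‖ ^ 2) / γ := le_div_self (by positivity) hγ0 hγ1.le
      _ = τ ^ 2 * L ^ 2 / γ * ‖u - w‖ ^ 2 := by ring
  rw [hzbar, norm_smul_add_one_sub_smul_sub_sq, norm_smul_add_one_sub_smul_sub_sq,
    norm_sub_rev w u] at hmean
  linarith [mul_nonneg hτ0.le hFu]

/-- one-step iteration decrease inequality for loopless SVRG-EG
(expectation over the sampled oracle index). -/
theorem stmt_2
    {V : Type*} [NormedAddCommGroup V] [InnerProductSpace ℝ V] [FiniteDimensional ℝ V]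
    (Z : Set V) (hZne : Z.Nonempty) (hZcpt : IsCompact Z) (hZconv : Convex ℝ Z)
    (projZ : V → V)
    (hprojmem : ∀ x, projZ x ∈ Z)
    (hproj : ∀ x, ∀ y ∈ Z, (inner ℝ (x - projZ x) (y - projZ x) : ℝ) ≤ 0)
    (F : V → V) (L : ℝ) (hL : 0 < L)
    (hmono : ∀ z₁ ∈ Z, ∀ z₂ ∈ Z, (0 : ℝ) ≤ inner ℝ (F z₁ - F z₂) (z₁ - z₂))
    (Zstar : Set V)
    (hZstar : Zstar = {zs ∈ Z | ∀ z ∈ Z, (0 : ℝ) ≤ inner ℝ (F zs) (z - zs)})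
    (hZstarNe : Zstar.Nonempty) (hZstarClosed : IsClosed Zstar)
    {Ω : Type*} [MeasurableSpace Ω] (P : Measure Ω) [IsProbabilityMeasure P]
    (Fo : Ω → V → V)
    (hFmeas : ∀ x : V, AEStronglyMeasurable (fun ω => Fo ω x) P)
    (hFint : ∀ x ∈ Z, Integrable (fun ω => Fo ω x) P)
    (hunb : ∀ x ∈ Z, ∫ ω, Fo ω x ∂P = F x)
    (hsqint : ∀ x ∈ Z, ∀ y ∈ Z, Integrable (fun ω => ‖Fo ω x - Fo ω y‖ ^ 2) P)
    (hlipmean : ∀ x ∈ Z, ∀ y ∈ Z,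
      ∫ ω, ‖Fo ω x - Fo ω y‖ ^ 2 ∂P ≤ L ^ 2 * ‖x - y‖ ^ 2)
    (α γ τ : ℝ) (hα0 : 0 ≤ α) (hα1 : α < 1) (hγ0 : 0 < γ) (hγ1 : γ < 1)
    (hτ0 : 0 < τ) (hτ : τ ≤ γ * Real.sqrt (1 - α) / L)
    (z w zbar u : V) (hz : z ∈ Z) (hw : w ∈ Z)
    (hzbar : zbar = α • z + (1 - α) • w)
    (hu : u = projZ (zbar - τ • F w))
    (zp : Ω → V)
    (hzp : ∀ ω, zp ω = projZ (zbar - τ • (F w + Fo ω u - Fo ω w))) :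
    ∀ zs ∈ Zstar,
      ∫ ω, ‖zp ω - zs‖ ^ 2 ∂P
        ≤ α * ‖z - zs‖ ^ 2 + (1 - α) * ‖w - zs‖ ^ 2
          - ((1 - α) - τ ^ 2 * L ^ 2 / γ) * ‖u - w‖ ^ 2 - α * ‖z - u‖ ^ 2 :=
  stmt_2_general Z projZ hprojmem hproj F L hmono Zstar hZstar P Fo hFint hunb hsqint hlipmean α γ τ
    hγ0 hγ1 hτ0 z w zbar u hw hzbar hu zp hzp
end

section
/- (One-step linear contraction of loopless SVRG-EG under error bounds.) Assume additionally the error bound dist(z, Z*) ≤ (C̄/σ)·‖z − Π_Z(z − σF(z))‖ for all z ∈ Z and all σ > 0. Let p ∈ (0, 1], α ∈ [0, 1), γ ∈ (0, 1), τ = γ·√(1−α)/L, and θ = α/(α + (1−α)/p). Fix z, w ∈ Z; set z̄ = αz + (1−α)w, u = Π_Z(z̄ − τF(w)), z⁺(ω) = Π_Z(z̄ − τ·(F(w) + F_ω(u) − F_ω(w))), and let w⁺(ω, b) equal z⁺(ω) if b = 1 and w if b = 0, where b is a Bernoulli(p) random variable independent of ω. Then E_{(ω,b)∼μ⊗Ber(p)}[dist^θ_{Z*}(z⁺(ω),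 w⁺(ω, b))] ≤ ρ·dist^θ_{Z*}(z, w), where ρ = 1 − τ²·(1 − γ)·αL² / ((4C̄²αL² + 8)·(α + (1−α)/p)). -/
open Metric MeasureTheory RealInnerProductSpace

/-!
Fix `z* ∈ Z*` attaining `dist^θ_{Z*}(z, w)`. The projection inequalities at `u` and `z⁺`,
unbiasedness and the mean-square Lipschitz bound give
`E‖z⁺ - z*‖² ≤ ‖z̄ - z*‖² - ‖z̄ - u‖² + τ²L²‖u - w‖²`, the term `⟪F u, u - z*⟫` being nonnegative by
monotonicity. Expanding `z̄ = αz + (1-α)w` and Young's inequality turn the right-hand side into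
`α‖z - z*‖² + (1-α)‖w - z*‖² - (1-γ)‖z̄ - u‖² - γ²(1-γ)α(1-α)‖z - w‖²`. The error bound at `z̄` with
step `τ` bounds `dist^θ_{Z*}(z, w)` by a combination of `‖z - w‖²` and `‖z̄ - u‖²`, so the two
negative terms absorb a fixed fraction of it. Averaging over the coin that refreshes the snapshot
`w`, the weight `θ = α / (α + (1-α)/p)` is exactly the one for which the potential recombines into
`ρ · dist^θ_{Z*}(z, w)`.
-/

section

variable {V : Type*} [NormedAddCommGroup V]

def phiTheta (θ : ℝ) (v z w : V) : ℝ := θ * ‖z - v‖ ^ 2 + (1 - θ) * ‖w - v‖ ^ 2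

theorem continuous_phiTheta (θ : ℝ) (z w : V) : Continuous fun v => phiTheta θ v z w := by
  unfold phiTheta; fun_prop

theorem phiTheta_nonneg {θ : ℝ} (hθ0 : 0 ≤ θ) (hθ1 : θ ≤ 1) (v z w : V) : 0 ≤ phiTheta θ v z w := by
  have : 0 ≤ 1 - θ := by linarith
  unfold phiTheta; positivity

section distTheta

variable [InnerProductSpace ℝ V] {Zstar : Set V} {θ : ℝ}

theorem distTheta_nonneg (hθ0 : 0 ≤ θ) (hθ1 : θ ≤ 1) (z w : V) : 0 ≤ distTheta Zstar θ z w :=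
  Real.sInf_nonneg <| by rintro _ ⟨v, -, rfl⟩; exact phiTheta_nonneg hθ0 hθ1 v z w

theorem distTheta_le_phiTheta (hθ0 : 0 ≤ θ) (hθ1 : θ ≤ 1) {v : V} (hv : v ∈ Zstar) (z w : V) :
    distTheta Zstar θ z w ≤ phiTheta θ v z w :=
  csInf_le ⟨0, by rintro _ ⟨v, -, rfl⟩; exact phiTheta_nonneg hθ0 hθ1 v z w⟩ ⟨v, hv, rfl⟩

theorem IsCompact.exists_distTheta_eq (hK : IsCompact Zstar) (hne : Zstar.Nonempty) (z w : V) :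
    ∃ v ∈ Zstar, distTheta Zstar θ z w = phiTheta θ v z w := by
  obtain ⟨v, hv, hmin⟩ := hK.exists_isMinOn hne (continuous_phiTheta θ z w).continuousOn
  exact ⟨v, hv, IsLeast.csInf_eq ⟨⟨v, hv, rfl⟩, by rintro _ ⟨y, hy, rfl⟩; exact hmin hy⟩⟩

theorem distTheta_le_two_mul_add_infDist_sq (hθ0 : 0 ≤ θ) (hθ1 : θ ≤ 1) (hK : IsCompact Zstar)
    (hne : Zstar.Nonempty) {α : ℝ} (hα0 : 0 ≤ α) (hα1 : α ≤ 1) (z w : V) :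
    distTheta Zstar θ z w
      ≤ 2 * ‖z - w‖ ^ 2 + 2 * infDist (α • z + (1 - α) • w) Zstar ^ 2 := by
  set zbar := α • z + (1 - α) • w
  obtain ⟨v, hv, hd⟩ := hK.exists_infDist_eq_dist hne zbar
  rw [dist_eq_norm] at hd
  have hz : ‖z - v‖ ≤ ‖z - w‖ + infDist zbar Zstar := calc
    ‖z - v‖ ≤ ‖z - zbar‖ + ‖zbar - v‖ := norm_sub_le_norm_sub_add_norm_sub _ _ _
    _ = (1 - α) * ‖z - w‖ + infDist zbar Zstar := by
      rw [hd, show z - zbar = (1 - α) • (z - w) by module, norm_smul,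
        Real.norm_of_nonneg (by linarith)]
    _ ≤ _ := by nlinarith [norm_nonneg (z - w)]
  have hw : ‖w - v‖ ≤ ‖z - w‖ + infDist zbar Zstar := calc
    ‖w - v‖ ≤ ‖w - zbar‖ + ‖zbar - v‖ := norm_sub_le_norm_sub_add_norm_sub _ _ _
    _ = α * ‖z - w‖ + infDist zbar Zstar := by
      rw [hd, show w - zbar = (-α) • (z - w) by module, norm_smul, norm_neg,
        Real.norm_of_nonneg hα0]
    _ ≤ _ := by nlinarith [norm_nonneg (z - w)]
  have hsq : ∀ y : V, ‖y‖ ≤ ‖z - w‖ + infDist zbar Zstar →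
      ‖y‖ ^ 2 ≤ 2 * ‖z - w‖ ^ 2 + 2 * infDist zbar Zstar ^ 2 := fun y hy =>
    (pow_le_pow_left₀ (norm_nonneg y) hy 2).trans (add_sq_le.trans_eq (by ring))
  calc distTheta Zstar θ z w ≤ phiTheta θ v z w := distTheta_le_phiTheta hθ0 hθ1 hv z w
    _ ≤ θ * (2 * ‖z - w‖ ^ 2 + 2 * infDist zbar Zstar ^ 2)
        + (1 - θ) * (2 * ‖z - w‖ ^ 2 + 2 * infDist zbar Zstar ^ 2) := by
      unfold phiTheta
      have h1 := mul_le_mul_of_nonneg_left (hsq _ hz) hθ0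
      have h2 := mul_le_mul_of_nonneg_left (hsq _ hw) (sub_nonneg.2 hθ1)
      linarith
    _ = _ := by ring

end distTheta

theorem norm_add_sq_le_div_add_div {s : ℝ} (hs0 : 0 < s) (hs1 : s < 1) (x y : V) :
    ‖x + y‖ ^ 2 ≤ ‖x‖ ^ 2 / s + ‖y‖ ^ 2 / (1 - s) := by
  have h1s : 0 < 1 - s := by linarith
  have htri : ‖x + y‖ ^ 2 ≤ (‖x‖ + ‖y‖) ^ 2 :=
    pow_le_pow_left₀ (norm_nonneg _) (norm_add_le x y) 2
  rw [div_add_div _ _ hs0.ne' h1s.ne', le_div_iff₀ (mul_pos hs0 h1s)]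
  nlinarith [sq_nonneg ((1 - s) * ‖x‖ - s * ‖y‖), mul_pos hs0 h1s]

theorem sq_mul_le_one_sub_mul_one_sub {α γ : ℝ} (hα0 : 0 ≤ α) (hα1 : α ≤ 1) (hγ0 : 0 ≤ γ)
    (hγ1 : γ ≤ 1) : γ ^ 2 * α ≤ (1 - γ * (1 - α)) * (1 - γ ^ 2 * (1 - γ)) := by
  have hX : 0 ≤ 1 - γ ^ 2 + γ ^ 3 := by nlinarith [mul_nonneg (mul_nonneg hγ0 hγ0) hγ0]
  have hY : 0 ≤ 1 + γ - γ ^ 2 := by nlinarith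
  nlinarith [mul_nonneg (mul_nonneg (sub_nonneg.2 hα1) (sub_nonneg.2 hγ1)) hX,
    mul_nonneg (mul_nonneg hα0 (sub_nonneg.2 hγ1)) hY]

section Geometry

variable [InnerProductSpace ℝ V]

theorem norm_smul_add_one_sub_smul_sq (α : ℝ) (x y : V) :
    ‖α • x + (1 - α) • y‖ ^ 2
      = α * ‖x‖ ^ 2 + (1 - α) * ‖y‖ ^ 2 - α * (1 - α) * ‖x - y‖ ^ 2 := by
  simp only [← real_inner_self_eq_norm_sq, inner_add_left, inner_add_right, inner_sub_left,
    inner_sub_right, real_inner_smul_left, real_inner_smul_right, real_inner_comm x y]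
  ring

theorem norm_convexComb_sub_sq_le {α γ : ℝ} (hα0 : 0 ≤ α) (hα1 : α < 1) (hγ0 : 0 < γ)
    (hγ1 : γ < 1) {z w zbar : V} (hzbar : zbar = α • z + (1 - α) • w) (q u : V) :
    ‖zbar - q‖ ^ 2 - ‖zbar - u‖ ^ 2 + γ ^ 2 * (1 - α) * ‖u - w‖ ^ 2
      ≤ α * ‖z - q‖ ^ 2 + (1 - α) * ‖w - q‖ ^ 2 - (1 - γ) * ‖zbar - u‖ ^ 2
        - γ ^ 2 * (1 - γ) * α * (1 - α) * ‖z - w‖ ^ 2 := by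
  have h1α : 0 < 1 - α := by linarith
  have hs0 : 0 < γ * (1 - α) := mul_pos hγ0 h1α
  have hs1 : 0 < 1 - γ * (1 - α) := by nlinarith
  have hzbarq : ‖zbar - q‖ ^ 2
      = α * ‖z - q‖ ^ 2 + (1 - α) * ‖w - q‖ ^ 2 - α * (1 - α) * ‖z - w‖ ^ 2 := by
    rw [hzbar, show α • z + (1 - α) • w - q = α • (z - q) + (1 - α) • (w - q) by module,
      norm_smul_add_one_sub_smul_sq, sub_sub_sub_cancel_right]
  have hyoung : ‖u - w‖ ^ 2
      ≤ ‖zbar - u‖ ^ 2 / (γ * (1 - α)) + α ^ 2 * ‖z - w‖ ^ 2 / (1 - γ * (1 - α)) := by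
    have h := norm_add_sq_le_div_add_div hs0 (by linarith) (u - zbar) (zbar - w)
    rwa [sub_add_sub_cancel, norm_sub_rev u zbar, show zbar - w = α • (z - w) by rw [hzbar]; module,
      norm_smul, mul_pow, Real.norm_of_nonneg hα0] at h
  have hcoef : γ ^ 2 * α / (1 - γ * (1 - α)) ≤ 1 - γ ^ 2 * (1 - γ) := by
    rw [div_le_iff₀ hs1, mul_comm (1 - _)]
    exact sq_mul_le_one_sub_mul_one_sub hα0 hα1.le hγ0.le hγ1.le
  have hstep : γ ^ 2 * (1 - α) * ‖u - w‖ ^ 2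
      ≤ γ * ‖zbar - u‖ ^ 2 + α * (1 - α) * (1 - γ ^ 2 * (1 - γ)) * ‖z - w‖ ^ 2 := calc
    _ ≤ γ ^ 2 * (1 - α) * (‖zbar - u‖ ^ 2 / (γ * (1 - α))
          + α ^ 2 * ‖z - w‖ ^ 2 / (1 - γ * (1 - α))) := by gcongr
    _ = γ * ‖zbar - u‖ ^ 2
          + α * (1 - α) * (γ ^ 2 * α / (1 - γ * (1 - α))) * ‖z - w‖ ^ 2 := by
      field_simp
    _ ≤ _ := by gcongr
  linarith

end Geometry

theorem inner_apply_sub_nonneg_of_monotoneOn [InnerProductSpace ℝ V] {Z : Set V} {F : V → V}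
    (hmono : ∀ z₁ ∈ Z, ∀ z₂ ∈ Z, 0 ≤ ⟪F z₁ - F z₂, z₁ - z₂⟫) {u v : V} (hu : u ∈ Z) (hv : v ∈ Z)
    (hvi : 0 ≤ ⟪F v, u - v⟫) : 0 ≤ ⟪F u, u - v⟫ := by
  have h := hmono u hu v hv
  rw [inner_sub_left] at h
  linarith

section Probability

open scoped NNReal

variable {Ω : Type*} [MeasurableSpace Ω] {P : Measure Ω}

theorem Continuous.integrable_comp_of_mem_compact {X E : Type*} [TopologicalSpace X]
    [NormedAddCommGroup E] [IsFiniteMeasure P] {K : Set X} (hK : IsCompact K) {φ : X → E}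
    (hφ : Continuous φ) {f : Ω → X} (hf : AEStronglyMeasurable f P) (hfK : ∀ ω, f ω ∈ K) :
    Integrable (fun ω => φ (f ω)) P := by
  obtain ⟨C, hC⟩ := hK.exists_bound_of_continuousOn hφ.continuousOn
  exact .of_bound (hφ.comp_aestronglyMeasurable hf) C (ae_of_all _ fun ω => hC _ (hfK ω))

theorem integral_prod_bernoulli {E : Type*} [NormedAddCommGroup E] [NormedSpace ℝ E]
    [CompleteSpace E] [SFinite P] {p : ℝ≥0} (hp : p ≤ 1) {g : Ω × Bool → E}
    (hg : Integrable g (P.prod (PMF.bernoulli p hp).toMeasure)) :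
    ∫ x, g x ∂(P.prod (PMF.bernoulli p hp).toMeasure)
      = (p : ℝ) • ∫ ω, g (ω, true) ∂P + (1 - (p : ℝ)) • ∫ ω, g (ω, false) ∂P := by
  rw [integral_prod_symm g hg, PMF.integral_eq_sum, Fintype.sum_bool]
  simp [PMF.bernoulli, hp]

theorem sq_norm_integral_le_integral_sq_norm [IsProbabilityMeasure P] {E : Type*}
    [NormedAddCommGroup E] [NormedSpace ℝ E] [CompleteSpace E] {f : Ω → E}
    (hf : Integrable f P) (hf2 : Integrable (fun ω => ‖f ω‖ ^ 2) P) :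
    ‖∫ ω, f ω ∂P‖ ^ 2 ≤ ∫ ω, ‖f ω‖ ^ 2 ∂P :=
  ((convexOn_norm convex_univ).pow (fun _ _ => norm_nonneg _) 2).map_integral_le
    (by fun_prop : Continuous fun x : E => ‖x‖ ^ 2).continuousOn isClosed_univ
    (ae_of_all _ fun _ => trivial) hf hf2

theorem norm_sub_le_of_integral_norm_sub_sq_le [IsProbabilityMeasure P] {E : Type*}
    [NormedAddCommGroup E] [NormedSpace ℝ E] [CompleteSpace E] {Z : Set V} {Fo : Ω → V → E}
    {F : V → E} {L : ℝ} (hL : 0 ≤ L)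
    (hFint : ∀ x ∈ Z, Integrable (fun ω => Fo ω x) P) (hunb : ∀ x ∈ Z, ∫ ω, Fo ω x ∂P = F x)
    (hsqint : ∀ x ∈ Z, ∀ y ∈ Z, Integrable (fun ω => ‖Fo ω x - Fo ω y‖ ^ 2) P)
    (hlipmean : ∀ x ∈ Z, ∀ y ∈ Z, ∫ ω, ‖Fo ω x - Fo ω y‖ ^ 2 ∂P ≤ L ^ 2 * ‖x - y‖ ^ 2)
    {x y : V} (hx : x ∈ Z) (hy : y ∈ Z) : ‖F x - F y‖ ≤ L * ‖x - y‖ := by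
  rw [← hunb x hx, ← hunb y hy, ← integral_sub (hFint x hx) (hFint y hy)]
  refine (pow_le_pow_iff_left₀ (norm_nonneg _) (by positivity) two_ne_zero).1 ?_
  calc _ ≤ _ := sq_norm_integral_le_integral_sq_norm ((hFint x hx).sub (hFint y hy))
        (hsqint x hx y hy)
    _ ≤ _ := hlipmean x hx y hy
    _ = _ := by ring

theorem integral_distTheta_prod_bernoulli_le [InnerProductSpace ℝ V] [IsProbabilityMeasure P]
    {p : ℝ≥0} (hp : p ≤ 1) {Zstar : Set V} {θ : ℝ} (hθ0 : 0 ≤ θ) (hθ1 : θ ≤ 1) {K : Set V}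
    (hK : IsCompact K) {f : Ω → V} (hf : AEStronglyMeasurable f P) (hfK : ∀ ω, f ω ∈ K)
    (w : V) {q : V} (hq : q ∈ Zstar) :
    ∫ x : Ω × Bool, distTheta Zstar θ (f x.1) (if x.2 then f x.1 else w)
        ∂(P.prod (PMF.bernoulli p hp).toMeasure)
      ≤ (p + (1 - p) * θ) * ∫ ω, ‖f ω - q‖ ^ 2 ∂P + (1 - p) * (1 - θ) * ‖w - q‖ ^ 2 := by
  have hφ : Continuous fun y : V × Bool => phiTheta θ q y.1 (if y.2 then y.1 else w) :=
    continuous_prod_of_discrete_right.2 fun b => by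
      cases b <;> simp only [phiTheta, Bool.false_eq_true, if_true, if_false] <;> fun_prop
  have hg := hφ.integrable_comp_of_mem_compact (P := P.prod (PMF.bernoulli p hp).toMeasure)
    (hK.prod isCompact_univ) (hf.comp_fst.prodMk measurable_snd.aestronglyMeasurable)
    (fun x => Set.mk_mem_prod (hfK x.1) (Set.mem_univ x.2))
  have hf2 := (by fun_prop : Continuous fun v : V => ‖v - q‖ ^ 2).integrable_comp_of_mem_compact
    hK hf hfK
  calc _ ≤ ∫ x : Ω × Bool, phiTheta θ q (f x.1) (if x.2 then f x.1 else w)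
          ∂(P.prod (PMF.bernoulli p hp).toMeasure) :=
        integral_mono_of_nonneg (ae_of_all _ fun _ => distTheta_nonneg hθ0 hθ1 _ _) hg
          (ae_of_all _ fun _ => distTheta_le_phiTheta hθ0 hθ1 hq _ _)
    _ = p * ∫ ω, ‖f ω - q‖ ^ 2 ∂P
          + (1 - p) * ∫ ω, (θ * ‖f ω - q‖ ^ 2 + (1 - θ) * ‖w - q‖ ^ 2) ∂P := by
      rw [integral_prod_bernoulli hp hg]
      simp only [phiTheta, if_true, Bool.false_eq_true, if_false, smul_eq_mul, ← add_mul,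
        add_sub_cancel, one_mul]
    _ = _ := by
      rw [integral_add (hf2.const_mul θ) (integrable_const _), integral_const_mul,
        integral_const, probReal_univ, one_smul]
      ring

end Probability

section Projection

variable [InnerProductSpace ℝ V] {Z : Set V} {projZ : V → V}
  (hproj : ∀ x, ∀ y ∈ Z, ⟪x - projZ x, y - projZ x⟫ ≤ 0)
include hproj

theorem norm_proj_sub_sq_le (x : V) {q : V} (hq : q ∈ Z) :
    ‖projZ x - q‖ ^ 2 ≤ ‖x - q‖ ^ 2 - ‖x - projZ x‖ ^ 2 := by
  have h := hproj x q hq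
  have e := norm_sub_sq_real (x - projZ x) (q - projZ x)
  rw [show x - projZ x - (q - projZ x) = x - q by abel, norm_sub_rev q] at e
  linarith

variable (hprojmem : ∀ x, projZ x ∈ Z)
include hprojmem

theorem norm_proj_sub_proj_le (x y : V) : ‖projZ x - projZ y‖ ≤ ‖x - y‖ := by
  have h1 := hproj x _ (hprojmem y)
  have h2 := hproj y _ (hprojmem x)
  have key : ‖projZ x - projZ y‖ ^ 2 ≤ ⟪x - y, projZ x - projZ y⟫ := by
    rw [← real_inner_self_eq_norm_sq]
    simp only [inner_sub_left, inner_sub_right] at h1 h2 ⊢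
    linarith [real_inner_comm (projZ x) (projZ y), real_inner_comm (projZ x) y,
      real_inner_comm (projZ y) x]
  have := real_inner_le_norm (x - y) (projZ x - projZ y)
  nlinarith [norm_nonneg (projZ x - projZ y), norm_nonneg (x - y)]

theorem continuous_proj : Continuous projZ :=
  (LipschitzWith.of_dist_le_mul (K := 1) fun x y => by
    simpa [dist_eq_norm] using norm_proj_sub_proj_le hproj hprojmem x y).continuous

theorem norm_proj_sub_sq_le_extragradient (xbar y g q : V) (τ : ℝ) (hq : q ∈ Z) :
    ‖projZ (xbar - τ • g) - q‖ ^ 2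
      ≤ ‖xbar - q‖ ^ 2 - ‖xbar - projZ (xbar - τ • y)‖ ^ 2
        - 2 * τ * ⟪g, projZ (xbar - τ • y) - q⟫ + τ ^ 2 * ‖g - y‖ ^ 2 := by
  set u := projZ (xbar - τ • y)
  set zp := projZ (xbar - τ • g)
  have h1 := norm_proj_sub_sq_le hproj (xbar - τ • g) hq
  have h2 := hproj (xbar - τ • y) zp (hprojmem _)
  -- Young's inequality for the cross term `2 τ ⟪g - y, zp - u⟫`
  have h3 := sq_nonneg ‖τ • (g - y) + (zp - u)‖
  rw [show xbar - τ • g - q = (xbar - u) + (u - q) - τ • g by abel,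
    show xbar - τ • g - zp = (xbar - u) - (zp - u) - τ • g by abel,
    show zp - q = (zp - u) + (u - q) by abel] at h1
  rw [show xbar - τ • y - u = (xbar - u) - τ • y by abel] at h2
  rw [show zp - q = (zp - u) + (u - q) by abel, show xbar - q = (xbar - u) + (u - q) by abel]
  generalize xbar - u = A, u - q = B, zp - u = C at *
  simp only [norm_add_sq_real, norm_sub_sq_real, inner_add_left, inner_sub_left,
    real_inner_smul_left, real_inner_smul_right, norm_smul, mul_pow, Real.norm_eq_abs,
    sq_abs] at h1 h2 h3 ⊢
  rw [real_inner_comm B g, real_inner_comm C g] at *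
  linarith

theorem integral_norm_extragradient_sub_sq_le [CompleteSpace V] {Ω : Type*} [MeasurableSpace Ω]
    {P : Measure Ω} [IsProbabilityMeasure P] {Fo : Ω → V → V} {F : V → V} {L : ℝ}
    (hFint : ∀ x ∈ Z, Integrable (fun ω => Fo ω x) P) (hunb : ∀ x ∈ Z, ∫ ω, Fo ω x ∂P = F x)
    (hsqint : ∀ x ∈ Z, ∀ y ∈ Z, Integrable (fun ω => ‖Fo ω x - Fo ω y‖ ^ 2) P)
    (hlipmean : ∀ x ∈ Z, ∀ y ∈ Z, ∫ ω, ‖Fo ω x - Fo ω y‖ ^ 2 ∂P ≤ L ^ 2 * ‖x - y‖ ^ 2)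
    {τ : ℝ} (hτ : 0 ≤ τ) {xbar u w q : V} (hu : u = projZ (xbar - τ • F w)) (hw : w ∈ Z)
    (hq : q ∈ Z) (hFu : 0 ≤ ⟪F u, u - q⟫)
    (hint : Integrable (fun ω => ‖projZ (xbar - τ • (F w + Fo ω u - Fo ω w)) - q‖ ^ 2) P) :
    ∫ ω, ‖projZ (xbar - τ • (F w + Fo ω u - Fo ω w)) - q‖ ^ 2 ∂P
      ≤ ‖xbar - q‖ ^ 2 - ‖xbar - u‖ ^ 2 + τ ^ 2 * L ^ 2 * ‖u - w‖ ^ 2 := by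
  have huZ : u ∈ Z := hu ▸ hprojmem _
  set c := ‖xbar - q‖ ^ 2 - ‖xbar - u‖ ^ 2 - 2 * τ * ⟪F w, u - q⟫
  have hδ : Integrable (fun ω => Fo ω u - Fo ω w) P := (hFint u huZ).sub (hFint w hw)
  have hpt : ∀ ω, ‖projZ (xbar - τ • (F w + Fo ω u - Fo ω w)) - q‖ ^ 2
      ≤ c - 2 * τ * ⟪u - q, Fo ω u - Fo ω w⟫ + τ ^ 2 * ‖Fo ω u - Fo ω w‖ ^ 2 := fun ω => by
    have h := norm_proj_sub_sq_le_extragradient hproj hprojmem xbar (F w)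
      (F w + Fo ω u - Fo ω w) q τ hq
    have hg : ⟪F w + Fo ω u - Fo ω w, u - q⟫ = ⟪F w, u - q⟫ + ⟪u - q, Fo ω u - Fo ω w⟫ := by
      rw [add_sub_assoc, inner_add_left, real_inner_comm (Fo ω u - Fo ω w)]
    rw [← hu, hg, show F w + Fo ω u - Fo ω w - F w = Fo ω u - Fo ω w by abel] at h
    linarith
  have hA : Integrable (fun ω => c - 2 * τ * ⟪u - q, Fo ω u - Fo ω w⟫) P :=
    (integrable_const c).sub ((hδ.const_inner (u - q)).const_mul _)
  have hB : Integrable (fun ω => τ ^ 2 * ‖Fo ω u - Fo ω w‖ ^ 2) P :=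
    (hsqint u huZ w hw).const_mul _
  have hmean : ∫ ω, (c - 2 * τ * ⟪u - q, Fo ω u - Fo ω w⟫ + τ ^ 2 * ‖Fo ω u - Fo ω w‖ ^ 2) ∂P
      = c - 2 * τ * ⟪u - q, F u - F w⟫ + τ ^ 2 * ∫ ω, ‖Fo ω u - Fo ω w‖ ^ 2 ∂P := by
    rw [integral_add hA hB,
      integral_sub (integrable_const c) ((hδ.const_inner (u - q)).const_mul _),
      integral_const, probReal_univ, one_smul, integral_const_mul, integral_const_mul,
      integral_inner hδ, integral_sub (hFint u huZ) (hFint w hw), hunb u huZ, hunb w hw]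
  have hcross : 2 * τ * ⟪F w, u - q⟫ + 2 * τ * ⟪u - q, F u - F w⟫ = 2 * τ * ⟪F u, u - q⟫ := by
    rw [inner_sub_right (u - q), real_inner_comm (F u), real_inner_comm (F w)]; ring
  calc _ ≤ _ := integral_mono hint (hA.add hB) hpt
    _ = _ := hmean
    _ ≤ _ := by
      linarith [mul_le_mul_of_nonneg_left (hlipmean u huZ w hw) (sq_nonneg τ),
        mul_nonneg (mul_nonneg zero_le_two hτ) hFu]

theorem distTheta_le_of_errorBound {Zstar : Set V} {θ : ℝ} (hθ0 : 0 ≤ θ) (hθ1 : θ ≤ 1)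
    (hK : IsCompact Zstar) (hne : Zstar.Nonempty) {F : V → V} {α C L τ : ℝ} (hα0 : 0 ≤ α)
    (hα1 : α ≤ 1) (hC : 0 ≤ C) (hτ : 0 < τ) {z w zbar u : V} (hzbar : zbar = α • z + (1 - α) • w)
    (hu : u = projZ (zbar - τ • F w))
    (heb : infDist zbar Zstar ≤ C / τ * ‖zbar - projZ (zbar - τ • F zbar)‖)
    (hFlip : ‖F zbar - F w‖ ≤ L * ‖zbar - w‖) :
    distTheta Zstar θ z w
      ≤ (2 + 4 * C ^ 2 * L ^ 2 * α ^ 2) * ‖z - w‖ ^ 2 + 4 * C ^ 2 / τ ^ 2 * ‖zbar - u‖ ^ 2 := by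
  rw [show zbar - w = α • (z - w) by rw [hzbar]; module, norm_smul,
    Real.norm_of_nonneg hα0] at hFlip
  have hres : ‖zbar - projZ (zbar - τ • F zbar)‖ ≤ ‖zbar - u‖ + τ * (L * (α * ‖z - w‖)) := calc
    _ ≤ ‖zbar - u‖ + ‖u - projZ (zbar - τ • F zbar)‖ := norm_sub_le_norm_sub_add_norm_sub _ _ _
    _ ≤ ‖zbar - u‖ + ‖(zbar - τ • F w) - (zbar - τ • F zbar)‖ := by
      rw [hu]; gcongr; exact norm_proj_sub_proj_le hproj hprojmem _ _
    _ = ‖zbar - u‖ + τ * ‖F zbar - F w‖ := by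
      rw [sub_sub_sub_cancel_left, ← smul_sub, norm_smul, Real.norm_of_nonneg hτ.le]
    _ ≤ _ := by gcongr
  have hd : infDist zbar Zstar ^ 2
      ≤ (C / τ) ^ 2 * (2 * (‖zbar - u‖ ^ 2 + (τ * (L * (α * ‖z - w‖))) ^ 2)) := by
    calc _ ≤ (C / τ * (‖zbar - u‖ + τ * (L * (α * ‖z - w‖)))) ^ 2 :=
          pow_le_pow_left₀ infDist_nonneg (heb.trans (by gcongr)) 2
      _ = _ := mul_pow _ _ 2
      _ ≤ _ := by gcongr; exact add_sq_le
  calc _ ≤ 2 * ‖z - w‖ ^ 2 + 2 * infDist zbar Zstar ^ 2 :=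
        hzbar ▸ distTheta_le_two_mul_add_infDist_sq hθ0 hθ1 hK hne hα0 hα1 z w
    _ ≤ 2 * ‖z - w‖ ^ 2
          + 2 * ((C / τ) ^ 2 * (2 * (‖zbar - u‖ ^ 2 + (τ * (L * (α * ‖z - w‖))) ^ 2))) := by
      gcongr
    _ = _ := by field_simp; ring

end Projection

theorem bernoulli_average_le {p α θ κ a b E : ℝ} (hp : 0 < p) (hα0 : 0 ≤ α) (hα1 : α ≤ 1)
    (hθ : θ = α / (α + (1 - α) / p))
    (hE : E ≤ α * a + (1 - α) * b - κ * (θ * a + (1 - θ) * b)) :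
    (p + (1 - p) * θ) * E + (1 - p) * (1 - θ) * b
      ≤ (1 - κ / (α + (1 - α) / p)) * (θ * a + (1 - θ) * b) := by
  set β := (1 - α) / p
  have hM : 0 < α + β := by
    rcases hα0.lt_or_eq with h | rfl
    · exact add_pos_of_pos_of_nonneg h (div_nonneg (by linarith) hp.le)
    · simp only [β, zero_add, sub_zero]; positivity
  have hpβ : 1 - α = p * β := (mul_div_cancel₀ _ hp.ne').symm
  have hweight : p + (1 - p) * θ = 1 / (α + β) := by
    rw [hθ, eq_div_iff hM.ne']; field_simp; linear_combination -hpβ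
  calc _ ≤ 1 / (α + β) * (α * a + (1 - α) * b - κ * (θ * a + (1 - θ) * b))
        + (1 - p) * (1 - θ) * b := by rw [hweight]; gcongr
    _ = _ := by rw [hθ, hpβ]; field_simp; ring

theorem contraction_mul_le {α γ τ L C q r D : ℝ} (hα0 : 0 ≤ α) (hα1 : α ≤ 1) (hγ1 : γ ≤ 1)
    (hτ : τ ≠ 0) (hτL : τ ^ 2 * L ^ 2 = γ ^ 2 * (1 - α)) (hq : 0 ≤ q) (hr : 0 ≤ r)
    (hD : D ≤ (2 + 4 * C ^ 2 * L ^ 2 * α ^ 2) * q + 4 * C ^ 2 / τ ^ 2 * r) :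
    τ ^ 2 * ((1 - γ) * α * L ^ 2) / (4 * C ^ 2 * α * L ^ 2 + 8) * D
      ≤ (1 - γ) * r + γ ^ 2 * (1 - γ) * α * (1 - α) * q := by
  have hden : 0 < 4 * C ^ 2 * α * L ^ 2 + 8 := by positivity
  have hκ : 0 ≤ τ ^ 2 * ((1 - γ) * α * L ^ 2) := by
    have : 0 ≤ 1 - γ := by linarith
    positivity
  have hexpand : τ ^ 2 * ((1 - γ) * α * L ^ 2)
        * ((2 + 4 * C ^ 2 * L ^ 2 * α ^ 2) * q + 4 * C ^ 2 / τ ^ 2 * r)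
      = τ ^ 2 * L ^ 2 * ((1 - γ) * α * q) * (2 + 4 * C ^ 2 * L ^ 2 * α ^ 2)
        + 4 * C ^ 2 * L ^ 2 * (1 - γ) * α * r := by
    field_simp
  rw [div_mul_eq_mul_div, div_le_iff₀ hden,
    show γ ^ 2 * (1 - γ) * α * (1 - α) * q = τ ^ 2 * L ^ 2 * ((1 - γ) * α * q) by rw [hτL]; ring]
  have h1 := mul_le_mul_of_nonneg_left hD hκ
  have h2 : 0 ≤ (1 - γ) * r := mul_nonneg (by linarith) hr
  have h3 : 0 ≤ τ ^ 2 * L ^ 2 * ((1 - γ) * α * q) * (6 + 4 * C ^ 2 * L ^ 2 * α * (1 - α)) := by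
    have : 0 ≤ 1 - γ := by linarith
    have : 0 ≤ 1 - α := by linarith
    positivity
  linarith [h1, h2, h3, hexpand]

end

theorem stmt_3_general
    {V : Type*} [NormedAddCommGroup V] [InnerProductSpace ℝ V] [FiniteDimensional ℝ V]
    (Z : Set V) (hZcpt : IsCompact Z) (hZconv : Convex ℝ Z)
    (projZ : V → V)
    (hprojmem : ∀ x, projZ x ∈ Z)
    (hproj : ∀ x, ∀ y ∈ Z, (inner ℝ (x - projZ x) (y - projZ x) : ℝ) ≤ 0)
    (F : V → V) (L : ℝ) (hL : 0 < L)
    (hmono : ∀ z₁ ∈ Z, ∀ z₂ ∈ Z, (0 : ℝ) ≤ inner ℝ (F z₁ - F z₂) (z₁ - z₂))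
    (Zstar : Set V)
    (hZstar : Zstar = {zs ∈ Z | ∀ z ∈ Z, (0 : ℝ) ≤ inner ℝ (F zs) (z - zs)})
    (hZstarNe : Zstar.Nonempty) (hZstarClosed : IsClosed Zstar)
    {Ω : Type*} [MeasurableSpace Ω] (P : Measure Ω) [IsProbabilityMeasure P]
    (Fo : Ω → V → V)
    (hFmeas : ∀ x : V, AEStronglyMeasurable (fun ω => Fo ω x) P)
    (hFint : ∀ x ∈ Z, Integrable (fun ω => Fo ω x) P)
    (hunb : ∀ x ∈ Z, ∫ ω, Fo ω x ∂P = F x)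
    (hsqint : ∀ x ∈ Z, ∀ y ∈ Z, Integrable (fun ω => ‖Fo ω x - Fo ω y‖ ^ 2) P)
    (hlipmean : ∀ x ∈ Z, ∀ y ∈ Z,
      ∫ ω, ‖Fo ω x - Fo ω y‖ ^ 2 ∂P ≤ L ^ 2 * ‖x - y‖ ^ 2)
    (C : ℝ) (hC : 0 < C)
    (heb : ∀ z ∈ Z, ∀ σ : ℝ, 0 < σ →
      infDist z Zstar ≤ (C / σ) * ‖z - projZ (z - σ • F z)‖)
    (p α γ τ θ ρ : ℝ) (hp0 : 0 < p) (hp1 : p ≤ 1)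
    (hα0 : 0 ≤ α) (hα1 : α < 1) (hγ0 : 0 < γ) (hγ1 : γ < 1)
    (hτ : τ = γ * Real.sqrt (1 - α) / L)
    (hθ : θ = α / (α + (1 - α) / p))
    (hρ : ρ = 1 - τ ^ 2 * ((1 - γ) * α * L ^ 2)
        / ((4 * C ^ 2 * α * L ^ 2 + 8) * (α + (1 - α) / p)))
    (z w zbar u : V) (hz : z ∈ Z) (hw : w ∈ Z)
    (hzbar : zbar = α • z + (1 - α) • w)
    (hu : u = projZ (zbar - τ • F w))
    (zp : Ω → V)
    (hzp : ∀ ω, zp ω = projZ (zbar - τ • (F w + Fo ω u - Fo ω w))) :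
    ∫ x : Ω × Bool, distTheta Zstar θ (zp x.1) (if x.2 then zp x.1 else w)
        ∂(P.prod ((PMF.bernoulli (Real.toNNReal p)
            (Real.toNNReal_le_one.mpr hp1)).toMeasure))
      ≤ ρ * distTheta Zstar θ z w := by
  obtain rfl : zp = _ := funext hzp
  have h1α : 0 < 1 - α := by linarith
  have hτ0 : 0 < τ := hτ ▸ by positivity
  have hτL : τ ^ 2 * L ^ 2 = γ ^ 2 * (1 - α) := by
    rw [hτ, div_pow, mul_pow, Real.sq_sqrt h1α.le]; field_simp
  have hθ0 : 0 ≤ θ := hθ ▸ by positivity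
  have hθ1 : θ ≤ 1 := by
    rw [hθ, div_le_one (by positivity)]; linarith [div_nonneg h1α.le hp0.le]
  have hZstarZ : Zstar ⊆ Z := hZstar ▸ fun _ h => h.1
  have hZstarCpt : IsCompact Zstar := hZcpt.of_isClosed_subset hZstarClosed hZstarZ
  obtain ⟨zs, hzs, hD⟩ := hZstarCpt.exists_distTheta_eq (θ := θ) hZstarNe z w
  have hzbarZ : zbar ∈ Z := hzbar ▸ hZconv hz hw hα0 h1α.le (by ring)
  have huZ : u ∈ Z := hu ▸ hprojmem _
  have hFu := inner_apply_sub_nonneg_of_monotoneOn hmono huZ (hZstarZ hzs)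
    (by rw [hZstar] at hzs; exact hzs.2 u huZ)
  have hzpm : AEStronglyMeasurable (fun ω => projZ (zbar - τ • (F w + Fo ω u - Fo ω w))) P :=
    (continuous_proj hproj hprojmem).comp_aestronglyMeasurable (aestronglyMeasurable_const.sub
      (((aestronglyMeasurable_const.add (hFmeas u)).sub (hFmeas w)).const_smul τ))
  have hE := integral_norm_extragradient_sub_sq_le hproj hprojmem hFint hunb hsqint hlipmean
    hτ0.le hu hw (hZstarZ hzs) hFu ((by fun_prop : Continuous fun v : V => ‖v - zs‖ ^ 2)
      |>.integrable_comp_of_mem_compact hZcpt hzpm fun _ => hprojmem _)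
  rw [hτL] at hE
  have hDle := distTheta_le_of_errorBound hproj hprojmem hθ0 hθ1 hZstarCpt hZstarNe hα0
    hα1.le hC.le hτ0 hzbar hu (heb zbar hzbarZ τ hτ0)
    (norm_sub_le_of_integral_norm_sub_sq_le hL.le hFint hunb hsqint hlipmean hzbarZ hw)
  have hκ := contraction_mul_le hα0 hα1.le hγ1.le hτ0.ne' hτL (sq_nonneg _) (sq_nonneg _) hDle
  calc _ ≤ _ :=
        integral_distTheta_prod_bernoulli_le _ hθ0 hθ1 hZcpt hzpm (fun _ => hprojmem _) w hzs
    _ ≤ ρ * distTheta Zstar θ z w := by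
      rw [Real.coe_toNNReal _ hp0.le, hρ, ← div_div, hD]
      refine bernoulli_average_le hp0 hα0 hα1.le hθ ?_
      rw [hD] at hκ
      unfold phiTheta at hκ
      linarith [norm_convexComb_sub_sq_le hα0 hα1 hγ0 hγ1 hzbar zs u]

/-- one-step linear contraction of loopless SVRG-EG under the
error-bound condition (Theorem 1). -/
theorem stmt_3
    {V : Type*} [NormedAddCommGroup V] [InnerProductSpace ℝ V] [FiniteDimensional ℝ V]
    (Z : Set V) (hZne : Z.Nonempty) (hZcpt : IsCompact Z) (hZconv : Convex ℝ Z)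
    (projZ : V → V)
    (hprojmem : ∀ x, projZ x ∈ Z)
    (hproj : ∀ x, ∀ y ∈ Z, (inner ℝ (x - projZ x) (y - projZ x) : ℝ) ≤ 0)
    (F : V → V) (L : ℝ) (hL : 0 < L)
    (hmono : ∀ z₁ ∈ Z, ∀ z₂ ∈ Z, (0 : ℝ) ≤ inner ℝ (F z₁ - F z₂) (z₁ - z₂))
    (Zstar : Set V)
    (hZstar : Zstar = {zs ∈ Z | ∀ z ∈ Z, (0 : ℝ) ≤ inner ℝ (F zs) (z - zs)})
    (hZstarNe : Zstar.Nonempty) (hZstarClosed : IsClosed Zstar)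
    {Ω : Type*} [MeasurableSpace Ω] (P : Measure Ω) [IsProbabilityMeasure P]
    (Fo : Ω → V → V)
    (hFmeas : ∀ x : V, AEStronglyMeasurable (fun ω => Fo ω x) P)
    (hFint : ∀ x ∈ Z, Integrable (fun ω => Fo ω x) P)
    (hunb : ∀ x ∈ Z, ∫ ω, Fo ω x ∂P = F x)
    (hsqint : ∀ x ∈ Z, ∀ y ∈ Z, Integrable (fun ω => ‖Fo ω x - Fo ω y‖ ^ 2) P)
    (hlipmean : ∀ x ∈ Z, ∀ y ∈ Z,
      ∫ ω, ‖Fo ω x - Fo ω y‖ ^ 2 ∂P ≤ L ^ 2 * ‖x - y‖ ^ 2)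
    (C : ℝ) (hC : 0 < C)
    (heb : ∀ z ∈ Z, ∀ σ : ℝ, 0 < σ →
      infDist z Zstar ≤ (C / σ) * ‖z - projZ (z - σ • F z)‖)
    (p α γ τ θ ρ : ℝ) (hp0 : 0 < p) (hp1 : p ≤ 1)
    (hα0 : 0 ≤ α) (hα1 : α < 1) (hγ0 : 0 < γ) (hγ1 : γ < 1)
    (hτ : τ = γ * Real.sqrt (1 - α) / L)
    (hθ : θ = α / (α + (1 - α) / p))
    (hρ : ρ = 1 - τ ^ 2 * ((1 - γ) * α * L ^ 2)
        / ((4 * C ^ 2 * α * L ^ 2 + 8) * (α + (1 - α) / p)))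
    (z w zbar u : V) (hz : z ∈ Z) (hw : w ∈ Z)
    (hzbar : zbar = α • z + (1 - α) • w)
    (hu : u = projZ (zbar - τ • F w))
    (zp : Ω → V)
    (hzp : ∀ ω, zp ω = projZ (zbar - τ • (F w + Fo ω u - Fo ω w))) :
    ∫ x : Ω × Bool, distTheta Zstar θ (zp x.1) (if x.2 then zp x.1 else w)
        ∂(P.prod ((PMF.bernoulli (Real.toNNReal p)
            (Real.toNNReal_le_one.mpr hp1)).toMeasure))
      ≤ ρ * distTheta Zstar θ z w :=
  stmt_3_general Z hZcpt hZconv projZ hprojmem hproj F L hL hmono Zstar hZstar hZstarNe hZstarClosed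
    P Fo hFmeas hFint hunb hsqint hlipmean C hC heb p α γ τ θ ρ hp0 hp1 hα0 hα1 hγ0 hγ1 hτ hθ hρ z w
    zbar u hz hw hzbar hu zp hzp
end

section
/- Suppose there is μ > 0 such that ⟪F(z*), y − Π_{Z*}(y)⟫ ≥ μ·‖y − Π_{Z*}(y)‖ for all y ∈ Z and z* ∈ Z*. Let τ > 0, θ ∈ [0, 1], and 0 < c ≤ τμ/D(Z). Then for all z, w ∈ Z, all u ∈ Z, and all z* ∈ Z*: c·dist^θ_{Z*}(z, w) ≤ 2τ·⟪F(u), u − z*⟫ + 2c·Φ^θ_u(z, w). -/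
open Metric

/-!
Let `p` be the projection of `u` onto `Z*`. Since `p ∈ Z*`, the weighted distance of `(z, w)` to
`Z*` is at most `Φ_p(z, w) ≤ 2 Φ_u(z, w) + 2 ‖u - p‖²`. The last term is absorbed by weak sharpness:
`c ‖u - p‖² ≤ c D(Z) ‖u - p‖ ≤ τ μ ‖u - p‖ ≤ τ ⟪F z*, u - p⟫ ≤ τ ⟪F z*, u - z*⟫ ≤ τ ⟪F u, u - z*⟫`,
using that `z*` solves the variational inequality (at `p`) and monotonicity of `F` (at `u`, `z*`).
-/

lemma norm_sub_sq_le_two_mul {E : Type*} [SeminormedAddCommGroup E] (a b c : E) :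
    ‖a - b‖ ^ 2 ≤ 2 * ‖a - c‖ ^ 2 + 2 * ‖c - b‖ ^ 2 := by
  calc ‖a - b‖ ^ 2 ≤ (‖a - c‖ + ‖c - b‖) ^ 2 :=
        pow_le_pow_left₀ (norm_nonneg _) (norm_sub_le_norm_sub_add_norm_sub a c b) 2
    _ ≤ 2 * (‖a - c‖ ^ 2 + ‖c - b‖ ^ 2) := add_sq_le
    _ = 2 * ‖a - c‖ ^ 2 + 2 * ‖c - b‖ ^ 2 := mul_add _ _ _

lemma mul_sq_le_of_le_div {r D c τ μ a : ℝ} (hr : 0 ≤ r) (hrD : r ≤ D) (hc0 : 0 ≤ c)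
    (hc : c ≤ τ * μ / D) (hτ : 0 ≤ τ) (ha : μ * r ≤ a) :
    c * r ^ 2 ≤ τ * a := by
  rcases (hr.trans hrD).eq_or_lt with rfl | hD
  · rw [div_zero] at hc
    rw [le_antisymm hc hc0, zero_mul]
    exact mul_nonneg hτ (by simpa [le_antisymm hrD hr] using ha)
  · have hcD : c * D ≤ τ * μ := (le_div_iff₀ hD).mp hc
    calc c * r ^ 2 ≤ c * D * r := by nlinarith [mul_le_mul_of_nonneg_left hrD hc0]
      _ ≤ τ * μ * r := mul_le_mul_of_nonneg_right hcD hr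
      _ ≤ τ * a := by rw [mul_assoc]; exact mul_le_mul_of_nonneg_left ha hτ

section WeightedSqDist

variable {E : Type*} [SeminormedAddCommGroup E]

/-- The paper's `Φ^θ_u(z, w)`. -/
def weightedSqDist (θ : ℝ) (u z w : E) : ℝ :=
  θ * ‖z - u‖ ^ 2 + (1 - θ) * ‖w - u‖ ^ 2

variable {θ : ℝ}

lemma weightedSqDist_nonneg (hθ0 : 0 ≤ θ) (hθ1 : θ ≤ 1) (u z w : E) :
    0 ≤ weightedSqDist θ u z w :=
  add_nonneg (by positivity) (mul_nonneg (sub_nonneg.mpr hθ1) (sq_nonneg _))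

lemma weightedSqDist_le (hθ0 : 0 ≤ θ) (hθ1 : θ ≤ 1) (p u z w : E) :
    weightedSqDist θ p z w ≤ 2 * weightedSqDist θ u z w + 2 * ‖u - p‖ ^ 2 := by
  have hz := mul_le_mul_of_nonneg_left (norm_sub_sq_le_two_mul z p u) hθ0
  have hw := mul_le_mul_of_nonneg_left (norm_sub_sq_le_two_mul w p u) (sub_nonneg.mpr hθ1)
  unfold weightedSqDist
  linarith

end WeightedSqDist

section VariationalInequality

variable {V : Type*} [NormedAddCommGroup V] [InnerProductSpace ℝ V]

lemma distTheta_le_weightedSqDist {θ : ℝ} (hθ0 : 0 ≤ θ) (hθ1 : θ ≤ 1) {Zstar : Set V} {p : V}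
    (hp : p ∈ Zstar) (z w : V) :
    distTheta Zstar θ z w ≤ weightedSqDist θ p z w := by
  refine csInf_le ⟨0, ?_⟩ ⟨p, hp, rfl⟩
  rintro _ ⟨q, -, rfl⟩
  exact weightedSqDist_nonneg hθ0 hθ1 q z w

lemma inner_sub_le_of_monotone {F : V → V} {u zs : V}
    (hmono : 0 ≤ inner ℝ (F u - F zs) (u - zs)) :
    inner ℝ (F zs) (u - zs) ≤ inner ℝ (F u) (u - zs) := by
  rw [inner_sub_left] at hmono
  linarith

lemma mul_norm_sub_le_inner_of_sharp {F : V → V} {μ : ℝ} {u p zs : V}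
    (hmono : 0 ≤ inner ℝ (F u - F zs) (u - zs)) (hsol : 0 ≤ inner ℝ (F zs) (p - zs))
    (hsharp : μ * ‖u - p‖ ≤ inner ℝ (F zs) (u - p)) :
    μ * ‖u - p‖ ≤ inner ℝ (F u) (u - zs) := by
  have hsplit : inner ℝ (F zs) (u - zs) = inner ℝ (F zs) (u - p) + inner ℝ (F zs) (p - zs) := by
    rw [← inner_add_right, sub_add_sub_cancel]
  linarith [inner_sub_le_of_monotone hmono]

end VariationalInequality

theorem stmt_6_general
    {V : Type*} [NormedAddCommGroup V] [InnerProductSpace ℝ V]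
    (Z : Set V) (hZcpt : IsCompact Z)
    (F : V → V)
    (hmono : ∀ z₁ ∈ Z, ∀ z₂ ∈ Z, (0 : ℝ) ≤ inner ℝ (F z₁ - F z₂) (z₁ - z₂))
    (Zstar : Set V)
    (hZstar : Zstar = {zs ∈ Z | ∀ z ∈ Z, (0 : ℝ) ≤ inner ℝ (F zs) (z - zs)})
    (projStar : V → V)
    (hprojStarMem : ∀ x, projStar x ∈ Zstar)
    (μ : ℝ)
    (hsharp : ∀ y ∈ Z, ∀ zs ∈ Zstar,
      μ * ‖y - projStar y‖ ≤ (inner ℝ (F zs) (y - projStar y) : ℝ))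
    (τ θ c : ℝ) (hτ : 0 < τ) (hθ0 : 0 ≤ θ) (hθ1 : θ ≤ 1)
    (hc0 : 0 < c) (hc : c ≤ τ * μ / diam Z) :
    ∀ z ∈ Z, ∀ w ∈ Z, ∀ u ∈ Z, ∀ zs ∈ Zstar,
      c * distTheta Zstar θ z w
        ≤ 2 * τ * (inner ℝ (F u) (u - zs) : ℝ)
          + 2 * c * (θ * ‖z - u‖ ^ 2 + (1 - θ) * ‖w - u‖ ^ 2) := by
  intro z _ w _ u hu zs hzs
  have hsol : ∀ x ∈ Zstar, x ∈ Z ∧ ∀ y ∈ Z, 0 ≤ inner ℝ (F x) (y - x) := by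
    rw [hZstar]; exact fun _ hx => hx
  set p := projStar u
  have hp : p ∈ Zstar := hprojStarMem u
  obtain ⟨hpZ, -⟩ := hsol p hp
  obtain ⟨hzsZ, hzsSol⟩ := hsol zs hzs
  have hgap : μ * ‖u - p‖ ≤ inner ℝ (F u) (u - zs) :=
    mul_norm_sub_le_inner_of_sharp (hmono u hu zs hzsZ) (hzsSol p hpZ) (hsharp u hu zs hzs)
  have hpu : ‖u - p‖ ≤ diam Z := by
    simpa only [dist_eq_norm] using dist_le_diam_of_mem hZcpt.isBounded hu hpZ
  have hproj : c * ‖u - p‖ ^ 2 ≤ τ * inner ℝ (F u) (u - zs) :=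
    mul_sq_le_of_le_div (norm_nonneg _) hpu hc0.le hc hτ.le hgap
  calc c * distTheta Zstar θ z w ≤ c * weightedSqDist θ p z w :=
        mul_le_mul_of_nonneg_left (distTheta_le_weightedSqDist hθ0 hθ1 hp z w) hc0.le
    _ ≤ c * (2 * weightedSqDist θ u z w + 2 * ‖u - p‖ ^ 2) :=
        mul_le_mul_of_nonneg_left (weightedSqDist_le hθ0 hθ1 p u z w) hc0.le
    _ ≤ 2 * τ * inner ℝ (F u) (u - zs) + 2 * c * weightedSqDist θ u z w := by linarith

/-- Lemma 6: weak-sharpness inner-product bound inside the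
algorithm's Lyapunov analysis. -/
theorem stmt_6
    {V : Type*} [NormedAddCommGroup V] [InnerProductSpace ℝ V] [FiniteDimensional ℝ V]
    (Z : Set V) (hZne : Z.Nonempty) (hZcpt : IsCompact Z) (hZconv : Convex ℝ Z)
    (F : V → V)
    (hmono : ∀ z₁ ∈ Z, ∀ z₂ ∈ Z, (0 : ℝ) ≤ inner ℝ (F z₁ - F z₂) (z₁ - z₂))
    (Zstar : Set V)
    (hZstar : Zstar = {zs ∈ Z | ∀ z ∈ Z, (0 : ℝ) ≤ inner ℝ (F zs) (z - zs)})
    (hZstarNe : Zstar.Nonempty) (hZstarClosed : IsClosed Zstar)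
    (hZstarConv : Convex ℝ Zstar)
    (projStar : V → V)
    (hprojStarMem : ∀ x, projStar x ∈ Zstar)
    (hprojStar : ∀ x, ∀ y ∈ Zstar, (inner ℝ (x - projStar x) (y - projStar x) : ℝ) ≤ 0)
    (μ : ℝ) (hμ : 0 < μ)
    (hsharp : ∀ y ∈ Z, ∀ zs ∈ Zstar,
      μ * ‖y - projStar y‖ ≤ (inner ℝ (F zs) (y - projStar y) : ℝ))
    (τ θ c : ℝ) (hτ : 0 < τ) (hθ0 : 0 ≤ θ) (hθ1 : θ ≤ 1)
    (hc0 : 0 < c) (hc : c ≤ τ * μ / diam Z) :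
    ∀ z ∈ Z, ∀ w ∈ Z, ∀ u ∈ Z, ∀ zs ∈ Zstar,
      c * distTheta Zstar θ z w
        ≤ 2 * τ * (inner ℝ (F u) (u - zs) : ℝ)
          + 2 * c * (θ * ‖z - u‖ ^ 2 + (1 - θ) * ‖w - u‖ ^ 2) :=
  stmt_6_general Z hZcpt F hmono Zstar hZstar projStar hprojStarMem μ hsharp τ θ c hτ hθ0 hθ1 hc0 hc
end

section
/- Let (F_k)_{k≥0} be a filtration on a probability space and (u_k)_{k≥1} a V-valued square-integrable process with u_{k+1} measurable with respect to F_{k+1} and E[u_{k+1} | F_k] = 0 for all k. Then for any K ∈ ℕ, any q ∈ {0, 1, 2, …}, and any compact set C ⊆ V: E[ max_{z∈C} Σ_{k=1}^{K−1} k^q ⟪u_{k+1}, z⟫ ] ≤ (1/2)·K^q·max_{z,z'∈C} ‖z − z'‖² + (1/2)·Σ_{k=0}^{K−1} k^q·E‖u_{k+1}‖². -/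
/-!
Put `W = ∑ₖ kᵠ • u (k + 1)`, so that the maximand is `⟪W, z⟫`. Fix `z₀ ∈ C`; Young's inequality
with weight `c = Kᵠ` gives `⟪W, z⟫ ≤ ⟪W, z₀⟫ + c/2 · ‖z - z₀‖² + ‖W‖² / (2c)` for every `z ∈ C`.
The term `⟪W, z₀⟫` has mean zero, and since the increments are orthogonal in `L²`,
`E‖W‖² = ∑ₖ k²ᵠ E‖u (k + 1)‖²`; finally `k²ᵠ / Kᵠ ≤ kᵠ` for `k < K`.
-/

open MeasureTheory

theorem sum_Icc_pow_sq_mul_le_pow_mul_sum_range (K q : ℕ) {e : ℕ → ℝ} (he : ∀ k, 0 ≤ e k) :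
    ∑ k ∈ Finset.Icc 1 (K - 1), ((k : ℝ) ^ q) ^ 2 * e k
      ≤ (K : ℝ) ^ q * ∑ k ∈ Finset.range K, (k : ℝ) ^ q * e k := by
  rw [Finset.mul_sum]
  refine (Finset.sum_le_sum fun k hk => ?_).trans
    (Finset.sum_le_sum_of_subset_of_nonneg ?_ fun k _ _ => by have := he k; positivity)
  · have hkK : (k : ℝ) ≤ K := by
      have := (Finset.mem_Icc.mp hk).2
      exact_mod_cast this.trans (Nat.sub_le K 1)
    have := he k
    rw [sq, mul_assoc]
    gcongr
  · intro k hk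
    simp only [Finset.mem_Icc, Finset.mem_range] at hk ⊢
    omega

section

variable {E : Type*} [NormedAddCommGroup E]

theorem norm_sub_sq_le_sSup {C : Set E} (hC : IsCompact C) {z z' : E} (hz : z ∈ C) (hz' : z' ∈ C) :
    ‖z - z'‖ ^ 2 ≤ sSup ((fun zz : E × E => ‖zz.1 - zz.2‖ ^ 2) '' (C ×ˢ C)) :=
  le_csSup ((hC.prod hC).image (by fun_prop)).bddAbove ⟨(z, z'), Set.mk_mem_prod hz hz', rfl⟩

theorem sSup_image_norm_sub_sq_nonneg (S : Set (E × E)) :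
    0 ≤ sSup ((fun zz : E × E => ‖zz.1 - zz.2‖ ^ 2) '' S) :=
  Real.sSup_nonneg (by rintro _ ⟨zz, -, rfl⟩; positivity)

variable [InnerProductSpace ℝ E]

theorem real_inner_le_mul_norm_sq_add_norm_sq_div (w d : E) {c : ℝ} (hc : 0 < c) :
    inner ℝ w d ≤ c / 2 * ‖d‖ ^ 2 + ‖w‖ ^ 2 / (2 * c) := by
  have hyoung : ‖w‖ * ‖d‖ ≤ c / 2 * ‖d‖ ^ 2 + ‖w‖ ^ 2 / (2 * c) := by
    have hgap : c / 2 * ‖d‖ ^ 2 + ‖w‖ ^ 2 / (2 * c) - ‖w‖ * ‖d‖ = (c * ‖d‖ - ‖w‖) ^ 2 / (2 * c) := by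
      field_simp
      ring
    linarith [hgap, show 0 ≤ (c * ‖d‖ - ‖w‖) ^ 2 / (2 * c) by positivity]
  exact (real_inner_le_norm w d).trans hyoung

theorem inner_le_sSup_image_inner {C : Set E} (hC : IsCompact C) {z₀ : E} (hz₀ : z₀ ∈ C) (w : E) :
    inner ℝ w z₀ ≤ sSup ((fun z => inner ℝ w z) '' C) :=
  le_csSup (hC.image (by fun_prop)).bddAbove ⟨z₀, hz₀, rfl⟩

theorem sSup_image_inner_le {C : Set E} (hC : IsCompact C) {z₀ : E} (hz₀ : z₀ ∈ C) (w : E)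
    {c : ℝ} (hc : 0 < c) :
    sSup ((fun z => inner ℝ w z) '' C) ≤ inner ℝ w z₀
      + c / 2 * sSup ((fun zz : E × E => ‖zz.1 - zz.2‖ ^ 2) '' (C ×ˢ C)) + ‖w‖ ^ 2 / (2 * c) := by
  refine csSup_le ⟨_, z₀, hz₀, rfl⟩ ?_
  rintro _ ⟨z, hz, rfl⟩
  calc inner ℝ w z = inner ℝ w z₀ + inner ℝ w (z - z₀) := by rw [inner_sub_right]; ring
    _ ≤ inner ℝ w z₀ + (c / 2 * ‖z - z₀‖ ^ 2 + ‖w‖ ^ 2 / (2 * c)) := by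
        gcongr
        exact real_inner_le_mul_norm_sq_add_norm_sq_div w (z - z₀) hc
    _ ≤ _ := by
        rw [← add_assoc]
        gcongr
        exact norm_sub_sq_le_sSup hC hz hz₀

theorem continuous_sSup_image_inner {C : Set E} (hC : IsCompact C) :
    Continuous fun w : E => sSup ((fun z => inner ℝ w z) '' C) :=
  hC.continuous_sSup (f := fun w z => inner ℝ w z) continuous_inner

variable {Ω : Type*} {m m0 : MeasurableSpace Ω} {μ : Measure Ω}

theorem MeasureTheory.MemLp.integrable_inner {f g : Ω → E} (hf : MemLp f 2 μ) (hg : MemLp g 2 μ) :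
    Integrable (fun ω => inner ℝ (f ω) (g ω)) μ := by
  rw [← memLp_one_iff_integrable]
  exact hf.of_bilin (fun x y => inner ℝ x y) 1 hg (hf.1.inner hg.1)
    (ae_of_all _ fun ω => by simpa using nnnorm_inner_le_nnnorm (𝕜 := ℝ) (f ω) (g ω))

theorem MeasureTheory.MemLp.integrable_sSup_image_inner [IsFiniteMeasure μ] {W : Ω → E}
    (hW : MemLp W 2 μ) {C : Set E} (hC : IsCompact C) :
    Integrable (fun ω => sSup ((fun z => inner ℝ (W ω) z) '' C)) μ := by
  rcases C.eq_empty_or_nonempty with rfl | ⟨z₀, hz₀⟩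
  · simp only [Set.image_empty, Real.sSup_empty]
    exact integrable_zero _ _ _
  have hlow : Integrable (fun ω => inner ℝ (W ω) z₀) μ := (hW.integrable one_le_two).inner_const z₀
  have hupp : Integrable (fun ω => inner ℝ (W ω) z₀
      + 1 / 2 * sSup ((fun zz : E × E => ‖zz.1 - zz.2‖ ^ 2) '' (C ×ˢ C)) + ‖W ω‖ ^ 2 / (2 * 1)) μ :=
    (hlow.add (integrable_const _)).add ((hW.integrable_norm_pow two_ne_zero).div_const _)
  exact integrable_of_le_of_le
    ((continuous_sSup_image_inner hC).comp_aestronglyMeasurable hW.aestronglyMeasurable)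
    (ae_of_all _ fun ω => inner_le_sSup_image_inner hC hz₀ (W ω))
    (ae_of_all _ fun ω => sSup_image_inner_le hC hz₀ (W ω) one_pos) hlow hupp

variable [CompleteSpace E]

theorem integral_eq_zero_of_condExp_eq_zero {g : Ω → E} (hm : m ≤ m0)
    [SigmaFinite (μ.trim hm)] (hcond : μ[g|m] =ᵐ[μ] 0) : ∫ ω, g ω ∂μ = 0 := by
  rw [← integral_condExp hm, integral_congr_ae hcond, Pi.zero_def, integral_zero]

theorem integral_inner_eq_zero_of_condExp_eq_zero {w g : Ω → E} (hm : m ≤ m0)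
    [SigmaFinite (μ.trim hm)] (hw : StronglyMeasurable[m] w)
    (hwg : Integrable (fun ω => inner ℝ (w ω) (g ω)) μ) (hg : Integrable g μ)
    (hcond : μ[g|m] =ᵐ[μ] 0) : ∫ ω, inner ℝ (w ω) (g ω) ∂μ = 0 := by
  have hpull : μ[fun ω => inner ℝ (w ω) (g ω)|m] =ᵐ[μ] fun ω => inner ℝ (w ω) (μ[g|m] ω) :=
    condExp_bilin_of_stronglyMeasurable_left (innerSL ℝ) hw hwg hg
  refine integral_eq_zero_of_condExp_eq_zero hm (hpull.trans ?_)
  filter_upwards [hcond] with ω hω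
  simp [hω]

theorem integral_norm_sq_sum_smul_of_condExp_eq_zero [IsFiniteMeasure μ]
    (ℱ : Filtration ℕ m0) {u : ℕ → Ω → E}
    (hadapted : ∀ k, StronglyMeasurable[ℱ (k + 1)] (u (k + 1)))
    (hL2 : ∀ k, MemLp (u (k + 1)) 2 μ) (hcond : ∀ k, μ[u (k + 1)|ℱ k] =ᵐ[μ] 0)
    (a : ℕ → ℝ) (s : Finset ℕ) :
    ∫ ω, ‖∑ k ∈ s, a k • u (k + 1) ω‖ ^ 2 ∂μ = ∑ k ∈ s, a k ^ 2 * ∫ ω, ‖u (k + 1) ω‖ ^ 2 ∂μ := by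
  classical
  induction s using Finset.induction_on_max with
  | empty => simp
  | insert n s hlt ih =>
    set S : Ω → E := fun ω => ∑ k ∈ s, a k • u (k + 1) ω
    have hS : MemLp S 2 μ := memLp_finsetSum _ fun k _ => (hL2 k).const_smul (a k)
    have hSmeas : StronglyMeasurable[ℱ n] S :=
      Finset.stronglyMeasurable_fun_sum _ fun k hk =>
        ((hadapted k).mono (ℱ.mono (hlt k hk))).const_smul (a k)
    have hSu : Integrable (fun ω => inner ℝ (S ω) (u (n + 1) ω)) μ :=
      hS.integrable_inner (hL2 n)
    have hcross : ∫ ω, inner ℝ (S ω) (u (n + 1) ω) ∂μ = 0 :=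
      integral_inner_eq_zero_of_condExp_eq_zero (ℱ.le n) hSmeas hSu
        ((hL2 n).integrable one_le_two) (hcond n)
    have hexpand : ∀ ω, ‖∑ k ∈ insert n s, a k • u (k + 1) ω‖ ^ 2
        = ‖S ω‖ ^ 2 + 2 * a n * inner ℝ (S ω) (u (n + 1) ω) + a n ^ 2 * ‖u (n + 1) ω‖ ^ 2 := by
      intro ω
      rw [Finset.sum_insert fun h => (hlt n h).false, add_comm, norm_add_sq_real, inner_smul_right,
        norm_smul, mul_pow, Real.norm_eq_abs, sq_abs]
      ring
    have hSsq : Integrable (fun ω => ‖S ω‖ ^ 2) μ := hS.integrable_norm_pow two_ne_zero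
    have husq : Integrable (fun ω => ‖u (n + 1) ω‖ ^ 2) μ := (hL2 n).integrable_norm_pow two_ne_zero
    have hfirst : Integrable (fun ω => ‖S ω‖ ^ 2 + 2 * a n * inner ℝ (S ω) (u (n + 1) ω)) μ :=
      hSsq.add (hSu.const_mul _)
    simp_rw [hexpand]
    rw [integral_add hfirst (husq.const_mul _),
      integral_add hSsq (hSu.const_mul _), integral_const_mul, integral_const_mul, hcross, ih,
      Finset.sum_insert fun h => (hlt n h).false]
    ring

theorem integral_sSup_sum_inner_le [IsProbabilityMeasure μ] (ℱ : Filtration ℕ m0) {u : ℕ → Ω → E}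
    (hadapted : ∀ k, StronglyMeasurable[ℱ (k + 1)] (u (k + 1)))
    (hL2 : ∀ k, MemLp (u (k + 1)) 2 μ) (hcond : ∀ k, μ[u (k + 1)|ℱ k] =ᵐ[μ] 0)
    (s : Finset ℕ) (a : ℕ → ℝ) {C : Set E} (hC : IsCompact C) {c : ℝ} (hc : 0 < c) :
    ∫ ω, sSup ((fun z => ∑ k ∈ s, a k * inner ℝ (u (k + 1) ω) z) '' C) ∂μ
      ≤ c / 2 * sSup ((fun zz : E × E => ‖zz.1 - zz.2‖ ^ 2) '' (C ×ˢ C))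
        + 1 / (2 * c) * ∑ k ∈ s, a k ^ 2 * ∫ ω, ‖u (k + 1) ω‖ ^ 2 ∂μ := by
  set D := sSup ((fun zz : E × E => ‖zz.1 - zz.2‖ ^ 2) '' (C ×ˢ C))
  rcases C.eq_empty_or_nonempty with rfl | ⟨z₀, hz₀⟩
  · simp only [Set.image_empty, Real.sSup_empty, integral_zero]
    have hvar : 0 ≤ ∑ k ∈ s, a k ^ 2 * ∫ ω, ‖u (k + 1) ω‖ ^ 2 ∂μ :=
      Finset.sum_nonneg fun k _ => mul_nonneg (sq_nonneg _) (integral_nonneg fun ω => sq_nonneg _)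
    have hD := sSup_image_norm_sub_sq_nonneg (∅ ×ˢ ∅ : Set (E × E))
    positivity
  set W : Ω → E := fun ω => ∑ k ∈ s, a k • u (k + 1) ω
  have hW : MemLp W 2 μ := memLp_finsetSum _ fun k _ => (hL2 k).const_smul (a k)
  have hsum_eq : ∀ ω, (fun z => ∑ k ∈ s, a k * inner ℝ (u (k + 1) ω) z) = fun z => inner ℝ (W ω) z :=
    fun ω => funext fun z => by simp only [W, sum_inner, real_inner_smul_left]
  have hW0 : ∫ ω, inner ℝ (W ω) z₀ ∂μ = 0 := by
    simp_rw [real_inner_comm z₀]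
    rw [integral_inner (hW.integrable one_le_two),
      integral_finsetSum (f := fun k ω => a k • u (k + 1) ω) _
        fun k _ => ((hL2 k).const_smul (a k)).integrable one_le_two,
      Finset.sum_eq_zero fun k _ => by
        rw [integral_smul, integral_eq_zero_of_condExp_eq_zero (ℱ.le k) (hcond k), smul_zero],
      inner_zero_right]
  have hlow : Integrable (fun ω => inner ℝ (W ω) z₀ + c / 2 * D) μ :=
    ((hW.integrable one_le_two).inner_const z₀).add (integrable_const _)
  have hsq : Integrable (fun ω => ‖W ω‖ ^ 2 / (2 * c)) μ :=
    (hW.integrable_norm_pow two_ne_zero).div_const _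
  simp_rw [hsum_eq]
  calc ∫ ω, sSup ((fun z => inner ℝ (W ω) z) '' C) ∂μ
      ≤ ∫ ω, inner ℝ (W ω) z₀ + c / 2 * D + ‖W ω‖ ^ 2 / (2 * c) ∂μ :=
        integral_mono (hW.integrable_sSup_image_inner hC) (hlow.add hsq)
          fun ω => sSup_image_inner_le hC hz₀ (W ω) hc
    _ = c / 2 * D + 1 / (2 * c) * ∫ ω, ‖W ω‖ ^ 2 ∂μ := by
        rw [integral_add hlow hsq, integral_add ((hW.integrable one_le_two).inner_const z₀)
          (integrable_const _), hW0, integral_const, integral_div, probReal_univ, one_smul]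
        ring
    _ = _ := by rw [integral_norm_sq_sum_smul_of_condExp_eq_zero ℱ hadapted hL2 hcond]

end

/-- Lemma 4: bound on the expected maximum of a polynomially
weighted sum of martingale-difference inner products over a compact set. -/
theorem stmt_8
    {V : Type*} [NormedAddCommGroup V] [InnerProductSpace ℝ V] [FiniteDimensional ℝ V]
    {Ω : Type*} {m0 : MeasurableSpace Ω} (μ : Measure Ω) [IsProbabilityMeasure μ]
    (ℱ : Filtration ℕ m0)
    (u : ℕ → Ω → V)
    (hadapted : ∀ k, StronglyMeasurable[ℱ (k + 1)] (u (k + 1)))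
    (hL2 : ∀ k, MemLp (u (k + 1)) 2 μ)
    (hcond : ∀ k, μ[u (k + 1) | ℱ k] =ᵐ[μ] 0)
    (K q : ℕ) (C : Set V) (hC : IsCompact C) :
    ∫ ω, sSup ((fun z => ∑ k ∈ Finset.Icc 1 (K - 1),
        (k : ℝ) ^ q * (inner ℝ (u (k + 1) ω) z : ℝ)) '' C) ∂μ
      ≤ (1 / 2) * (K : ℝ) ^ q
          * sSup ((fun zz : V × V => ‖zz.1 - zz.2‖ ^ 2) '' (C ×ˢ C))
        + (1 / 2) * ∑ k ∈ Finset.range K,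
            (k : ℝ) ^ q * ∫ ω, ‖u (k + 1) ω‖ ^ 2 ∂μ := by
  have hD := sSup_image_norm_sub_sq_nonneg (C ×ˢ C)
  have he : ∀ k, 0 ≤ ∫ ω, ‖u (k + 1) ω‖ ^ 2 ∂μ := fun k => integral_nonneg fun ω => sq_nonneg _
  -- For `K = 0` the weight `Kᵠ` may vanish, but then the sum is empty.
  rcases K.eq_zero_or_pos with rfl | hK
  · simp only [zero_tsub, Finset.Icc_eq_empty_of_lt zero_lt_one, Finset.sum_empty,
      Finset.range_zero, mul_zero, add_zero, integral_const, probReal_univ, one_smul]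
    have hsup : sSup ((fun _ : V => (0 : ℝ)) '' C) ≤ 0 :=
      Real.sSup_nonpos (by rintro _ ⟨_, _, rfl⟩; rfl)
    exact hsup.trans (mul_nonneg (by positivity) hD)
  have hKq : (0 : ℝ) < (K : ℝ) ^ q := by positivity
  have hweights := sum_Icc_pow_sq_mul_le_pow_mul_sum_range K q he
  calc _ ≤ (K : ℝ) ^ q / 2 * _ + 1 / (2 * (K : ℝ) ^ q) * ∑ k ∈ Finset.Icc 1 (K - 1),
          ((k : ℝ) ^ q) ^ 2 * ∫ ω, ‖u (k + 1) ω‖ ^ 2 ∂μ :=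
        integral_sSup_sum_inner_le ℱ hadapted hL2 hcond _ (fun k => (k : ℝ) ^ q) hC hKq
    _ ≤ (K : ℝ) ^ q / 2 * _ + 1 / (2 * (K : ℝ) ^ q) * ((K : ℝ) ^ q
          * ∑ k ∈ Finset.range K, (k : ℝ) ^ q * ∫ ω, ‖u (k + 1) ω‖ ^ 2 ∂μ) := by gcongr
    _ = _ := by field_simp
end

section
/- (One-step linear contraction of deterministic extragradient under error bounds; Tseng.) Assume F is L-Lipschitz on Z and satisfies the error bound dist(z, Z*) ≤ (C̄/σ)·‖z − Π_Z(z − σF(z))‖ for all z ∈ Z and all σ > 0. Let γ ∈ (0, 1) and τ = γ/L. Fix z ∈ Z and set u = Π_Z(z − τF(z)) and z⁺ = Π_Z(z − τF(u)). Then dist(z⁺, Z*)² ≤ (1 − τ²·(1 − γ)³/(2C̄²))·dist(z, Z*)². -/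
/-!
Tseng's argument. For every solution `z*`, the two projection inequalities (at `u` and at `z⁺`),
monotonicity (`⟪F u, u - z*⟫ ≥ 0`) and the Lipschitz bound (`‖τ (F u - F z)‖ ≤ γ ‖u - z‖`) give
the descent inequality `‖z⁺ - z*‖² ≤ ‖z - z*‖² - (1 - γ) ‖z - u‖²`; taking the infimum over `z*`
turns it into the same inequality for `dist(·, Z*)²`. The error bound with `σ = τ` says
`‖z - u‖ ≥ (τ / C) dist(z, Z*)`, which converts the decrease into a linear rate (with the factor
`1 - γ`, which dominates the stated `(1 - γ)³ / 2`).
-/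

open Metric

lemma le_infDist_sq {X : Type*} [PseudoMetricSpace X] {x : X} {s : Set X} {a : ℝ}
    (hs : s.Nonempty) (h : ∀ y ∈ s, a ≤ dist x y ^ 2) : a ≤ infDist x s ^ 2 := by
  rcases le_or_gt a 0 with ha | ha
  · exact ha.trans (sq_nonneg _)
  have hsqrt : √a ≤ infDist x s := (le_infDist hs).2 fun y hy =>
    (Real.sqrt_le_sqrt (h y hy)).trans_eq (Real.sqrt_sq dist_nonneg)
  calc a = √a ^ 2 := (Real.sq_sqrt ha.le).symm
    _ ≤ infDist x s ^ 2 := pow_le_pow_left₀ (Real.sqrt_nonneg _) hsqrt 2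

section InnerProductSpace

variable {V : Type*} [NormedAddCommGroup V] [InnerProductSpace ℝ V]

lemma real_inner_le_half_mul_add_sq {a b c : V} {γ : ℝ} (hγ : 0 ≤ γ) (hab : ‖a‖ ≤ γ * ‖b‖) :
    inner ℝ a c ≤ γ / 2 * (‖b‖ ^ 2 + ‖c‖ ^ 2) :=
  calc inner ℝ a c ≤ ‖a‖ * ‖c‖ := real_inner_le_norm a c
    _ ≤ γ * ‖b‖ * ‖c‖ := mul_le_mul_of_nonneg_right hab (norm_nonneg c)
    _ ≤ γ / 2 * (‖b‖ ^ 2 + ‖c‖ ^ 2) := by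
      nlinarith [mul_le_mul_of_nonneg_left (two_mul_le_add_sq ‖b‖ ‖c‖) hγ]

/-- The algebraic core of the descent inequality, written in the increments
`a = z - u`, `b = u - z⁺`, `c = z⁺ - z*` and the steps `g = τ F u`, `f = τ F z`. -/
lemma norm_sq_le_of_extragradient_increments {a b c f g : V} {γ : ℝ} (hγ : γ ≤ 1)
    (hproj₁ : 0 ≤ inner ℝ (a + b - g) c) (hproj₂ : 0 ≤ inner ℝ (a - f) b)
    (hmono : 0 ≤ inner ℝ g (b + c))
    (hlip : inner ℝ (g - f) b ≤ γ / 2 * (‖a‖ ^ 2 + ‖b‖ ^ 2)) :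
    ‖c‖ ^ 2 ≤ ‖a + b + c‖ ^ 2 - (1 - γ) * ‖a‖ ^ 2 := by
  rw [norm_add_sq_real, norm_add_sq_real, inner_add_left]
  simp only [inner_add_left, inner_add_right, inner_sub_left] at hproj₁ hproj₂ hmono hlip
  nlinarith [sq_nonneg ‖b‖, real_inner_comm a b]

variable {Z : Set V} {P F : V → V} {L τ : ℝ}

lemma real_inner_apply_sub_nonneg_of_monotone_of_solution
    (hmono : ∀ z₁ ∈ Z, ∀ z₂ ∈ Z, (0 : ℝ) ≤ inner ℝ (F z₁ - F z₂) (z₁ - z₂))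
    {u zs : V} (hu : u ∈ Z) (hzs : zs ∈ Z) (hsol : ∀ y ∈ Z, (0 : ℝ) ≤ inner ℝ (F zs) (y - zs)) :
    0 ≤ inner ℝ (F u) (u - zs) := by
  have h := hmono u hu zs hzs
  rw [inner_sub_left] at h
  linarith [hsol u hu]

lemma norm_extragradient_sub_solution_sq_le
    (hPmem : ∀ x, P x ∈ Z) (hP : ∀ x, ∀ y ∈ Z, (inner ℝ (x - P x) (y - P x) : ℝ) ≤ 0)
    (hmono : ∀ z₁ ∈ Z, ∀ z₂ ∈ Z, (0 : ℝ) ≤ inner ℝ (F z₁ - F z₂) (z₁ - z₂))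
    (hlip : ∀ z₁ ∈ Z, ∀ z₂ ∈ Z, ‖F z₁ - F z₂‖ ≤ L * ‖z₁ - z₂‖)
    (hτ : 0 ≤ τ) (hL : 0 ≤ L) (hτL : τ * L ≤ 1)
    {z zs : V} (hz : z ∈ Z) (hzs : zs ∈ Z) (hsol : ∀ y ∈ Z, (0 : ℝ) ≤ inner ℝ (F zs) (y - zs)) :
    ‖P (z - τ • F (P (z - τ • F z))) - zs‖ ^ 2
      ≤ ‖z - zs‖ ^ 2 - (1 - τ * L) * ‖z - P (z - τ • F z)‖ ^ 2 := by
  set u := P (z - τ • F z)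
  set zplus := P (z - τ • F u)
  have hu : u ∈ Z := hPmem _
  have hstep : ‖τ • F u - τ • F z‖ ≤ τ * L * ‖z - u‖ := by
    rw [← smul_sub, norm_smul, Real.norm_of_nonneg hτ, mul_assoc, norm_sub_rev z u]
    exact mul_le_mul_of_nonneg_left (hlip u hu z hz) hτ
  have key := norm_sq_le_of_extragradient_increments (a := z - u) (b := u - zplus)
    (c := zplus - zs) (f := τ • F z) (g := τ • F u) (γ := τ * L) hτL ?_ ?_ ?_
    (real_inner_le_half_mul_add_sq (mul_nonneg hτ hL) hstep)
  · rwa [sub_add_sub_cancel, sub_add_sub_cancel] at key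
  · have h := hP (z - τ • F u) zs hzs
    rw [← neg_sub zplus zs, inner_neg_right] at h
    convert neg_nonpos.1 h using 2
    abel
  · have h := hP (z - τ • F z) zplus (hPmem _)
    rw [← neg_sub u zplus, inner_neg_right] at h
    convert neg_nonpos.1 h using 2
    abel
  · rw [sub_add_sub_cancel, real_inner_smul_left]
    exact mul_nonneg hτ (real_inner_apply_sub_nonneg_of_monotone_of_solution hmono hu hzs hsol)

end InnerProductSpace

theorem stmt_10_general
    {V : Type*} [NormedAddCommGroup V] [InnerProductSpace ℝ V]
    (Z : Set V)
    (projZ : V → V)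
    (hprojmem : ∀ x, projZ x ∈ Z)
    (hproj : ∀ x, ∀ y ∈ Z, (inner ℝ (x - projZ x) (y - projZ x) : ℝ) ≤ 0)
    (F : V → V) (L : ℝ) (hL : 0 < L)
    (hmono : ∀ z₁ ∈ Z, ∀ z₂ ∈ Z, (0 : ℝ) ≤ inner ℝ (F z₁ - F z₂) (z₁ - z₂))
    (hlip : ∀ z₁ ∈ Z, ∀ z₂ ∈ Z, ‖F z₁ - F z₂‖ ≤ L * ‖z₁ - z₂‖)
    (Zstar : Set V)
    (hZstar : Zstar = {zs ∈ Z | ∀ z ∈ Z, (0 : ℝ) ≤ inner ℝ (F zs) (z - zs)})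
    (hZstarNe : Zstar.Nonempty)
    (C : ℝ) (hC : 0 < C)
    (heb : ∀ z ∈ Z, ∀ σ : ℝ, 0 < σ →
      infDist z Zstar ≤ (C / σ) * ‖z - projZ (z - σ • F z)‖)
    (γ τ : ℝ) (hγ0 : 0 < γ) (hγ1 : γ < 1) (hτ : τ = γ / L)
    (z u zplus : V) (hz : z ∈ Z)
    (hu : u = projZ (z - τ • F z))
    (hzplus : zplus = projZ (z - τ • F u)) :
    infDist zplus Zstar ^ 2
      ≤ (1 - τ ^ 2 * (1 - γ) ^ 3 / (2 * C ^ 2)) * infDist z Zstar ^ 2 := by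
  have hτ0 : 0 < τ := by rw [hτ]; positivity
  have hτL : τ * L = γ := by rw [hτ]; field_simp
  set d := infDist z Zstar
  have hdescent : infDist zplus Zstar ^ 2 ≤ d ^ 2 - (1 - γ) * ‖z - u‖ ^ 2 := by
    rw [le_sub_iff_add_le]
    refine le_infDist_sq hZstarNe fun zs hzs => ?_
    obtain ⟨hzsZ, hsol⟩ : zs ∈ Z ∧ ∀ y ∈ Z, 0 ≤ inner ℝ (F zs) (y - zs) := by rwa [hZstar] at hzs
    have h := norm_extragradient_sub_solution_sq_le hprojmem hproj hmono hlip hτ0.le hL.le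
      (hτL.trans_le hγ1.le) hz hzsZ hsol
    rw [← hu, ← hzplus, hτL, ← dist_eq_norm, ← dist_eq_norm] at h
    linarith [pow_le_pow_left₀ infDist_nonneg (infDist_le_dist_of_mem (x := zplus) hzs) 2]
  have herror : τ / C * d ≤ ‖z - u‖ := by
    have h := heb z hz τ hτ0
    rw [← hu] at h
    calc τ / C * d ≤ τ / C * (C / τ * ‖z - u‖) := by gcongr
      _ = ‖z - u‖ := by field_simp
  have hcube : (1 - γ) ^ 3 / 2 ≤ 1 - γ := by
    have h2 : (1 - γ) ^ 2 ≤ 1 := pow_le_one₀ (by linarith) (by linarith)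
    nlinarith
  calc infDist zplus Zstar ^ 2 ≤ d ^ 2 - (1 - γ) * ‖z - u‖ ^ 2 := hdescent
    _ ≤ d ^ 2 - (1 - γ) * (τ / C * d) ^ 2 := by
      have : 0 ≤ 1 - γ := by linarith
      gcongr
      exact mul_nonneg (div_nonneg hτ0.le hC.le) infDist_nonneg
    _ ≤ d ^ 2 - (1 - γ) ^ 3 / 2 * (τ / C * d) ^ 2 := by
      linarith [mul_le_mul_of_nonneg_right hcube (sq_nonneg (τ / C * d))]
    _ = (1 - τ ^ 2 * (1 - γ) ^ 3 / (2 * C ^ 2)) * d ^ 2 := by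
      field_simp

/-- Tseng: one-step linear contraction of the deterministic
extragradient method under the error-bound condition. -/
theorem stmt_10
    {V : Type*} [NormedAddCommGroup V] [InnerProductSpace ℝ V] [FiniteDimensional ℝ V]
    (Z : Set V) (hZne : Z.Nonempty) (hZcpt : IsCompact Z) (hZconv : Convex ℝ Z)
    (projZ : V → V)
    (hprojmem : ∀ x, projZ x ∈ Z)
    (hproj : ∀ x, ∀ y ∈ Z, (inner ℝ (x - projZ x) (y - projZ x) : ℝ) ≤ 0)
    (F : V → V) (L : ℝ) (hL : 0 < L)
    (hmono : ∀ z₁ ∈ Z, ∀ z₂ ∈ Z, (0 : ℝ) ≤ inner ℝ (F z₁ - F z₂) (z₁ - z₂))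
    (hlip : ∀ z₁ ∈ Z, ∀ z₂ ∈ Z, ‖F z₁ - F z₂‖ ≤ L * ‖z₁ - z₂‖)
    (Zstar : Set V)
    (hZstar : Zstar = {zs ∈ Z | ∀ z ∈ Z, (0 : ℝ) ≤ inner ℝ (F zs) (z - zs)})
    (hZstarNe : Zstar.Nonempty) (hZstarClosed : IsClosed Zstar)
    (C : ℝ) (hC : 0 < C)
    (heb : ∀ z ∈ Z, ∀ σ : ℝ, 0 < σ →
      infDist z Zstar ≤ (C / σ) * ‖z - projZ (z - σ • F z)‖)
    (γ τ : ℝ) (hγ0 : 0 < γ) (hγ1 : γ < 1) (hτ : τ = γ / L)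
    (z u zplus : V) (hz : z ∈ Z)
    (hu : u = projZ (z - τ • F z))
    (hzplus : zplus = projZ (z - τ • F u)) :
    infDist zplus Zstar ^ 2
      ≤ (1 - τ ^ 2 * (1 - γ) ^ 3 / (2 * C ^ 2)) * infDist z Zstar ^ 2 :=
  stmt_10_general Z projZ hprojmem hproj F L hL hmono hlip Zstar hZstar hZstarNe C hC heb γ τ hγ0
    hγ1 hτ z u zplus hz hu hzplus
end

section
/- (One-step decrease inequality for deterministic extragradient.) Assume F is L-Lipschitz on Z. Let τ > 0, fix z ∈ Z, and set u = Π_Z(z − τF(z)) and z⁺ = Π_Z(z − τF(u)). Then for every z* ∈ Z*: ‖z⁺ − z*‖² ≤ ‖z − z*‖² − ‖z − u‖² − ‖u − z⁺‖² + 2τL·‖u − z‖·‖u − z⁺‖. -/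
/-!
Write `v = z - τ F z` and `w = z - τ F u`, so that `u = Π_Z v` and `z⁺ = Π_Z w`. Expanding squares,
`‖z⁺ - z*‖²` equals `‖z - z*‖² - ‖z - u‖² - ‖u - z⁺‖²` plus four correction terms: the two
obtuse-angle terms of the projections onto `Z` (tested at `z*` and at `z⁺`), which are `≤ 0`;
the term `τ ⟪F u, z* - u⟫`, which is `≤ 0` because a solution of a monotone variational
inequality is also a solution of its Minty form; and `τ ⟪F u - F z, u - z⁺⟫`, which
Cauchy–Schwarz and the Lipschitz bound control by `τ L ‖u - z‖ ‖u - z⁺‖`.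
-/

section ExtragradientStep

variable {V : Type*} [NormedAddCommGroup V] [InnerProductSpace ℝ V]

theorem norm_sub_sq_eq_extragradient (τ : ℝ) (z u zp zs a b : V) :
    ‖zp - zs‖ ^ 2 = ‖z - zs‖ ^ 2 - ‖z - u‖ ^ 2 - ‖u - zp‖ ^ 2
      + 2 * inner ℝ ((z - τ • b) - zp) (zs - zp) + 2 * inner ℝ ((z - τ • a) - u) (zp - u)
      + 2 * τ * inner ℝ b (zs - u) + 2 * τ * inner ℝ (b - a) (u - zp) := by
  simp only [← real_inner_self_eq_norm_sq, inner_sub_left, inner_sub_right,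
    real_inner_smul_left, real_inner_comm z zs, real_inner_comm z u,
    real_inner_comm zs zp, real_inner_comm u zp]
  ring

theorem inner_apply_sub_nonpos_of_monotone_of_solution {Z : Set V} {F : V → V} {zs u : V}
    (hmono : ∀ z₁ ∈ Z, ∀ z₂ ∈ Z, (0 : ℝ) ≤ inner ℝ (F z₁ - F z₂) (z₁ - z₂))
    (hzs : zs ∈ Z) (hvi : ∀ z ∈ Z, (0 : ℝ) ≤ inner ℝ (F zs) (z - zs)) (hu : u ∈ Z) :
    inner ℝ (F u) (zs - u) ≤ (0 : ℝ) := by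
  have hsplit : inner ℝ (F u) (zs - u)
      = -(inner ℝ (F u - F zs) (u - zs) + inner ℝ (F zs) (u - zs) : ℝ) := by
    simp only [inner_sub_left, inner_sub_right]
    ring
  linarith [hsplit, hmono u hu zs hzs, hvi u hu]

theorem inner_sub_apply_le_of_lipschitz {Z : Set V} {F : V → V} {L : ℝ}
    (hlip : ∀ z₁ ∈ Z, ∀ z₂ ∈ Z, ‖F z₁ - F z₂‖ ≤ L * ‖z₁ - z₂‖)
    {u z : V} (hu : u ∈ Z) (hz : z ∈ Z) (w : V) :
    inner ℝ (F u - F z) w ≤ L * ‖u - z‖ * ‖w‖ :=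
  (real_inner_le_norm _ _).trans
    (mul_le_mul_of_nonneg_right (hlip u hu z hz) (norm_nonneg w))

end ExtragradientStep

theorem stmt_11_general
    {V : Type*} [NormedAddCommGroup V] [InnerProductSpace ℝ V]
    (Z : Set V)
    (projZ : V → V)
    (hprojmem : ∀ x, projZ x ∈ Z)
    (hproj : ∀ x, ∀ y ∈ Z, (inner ℝ (x - projZ x) (y - projZ x) : ℝ) ≤ 0)
    (F : V → V) (L : ℝ)
    (hmono : ∀ z₁ ∈ Z, ∀ z₂ ∈ Z, (0 : ℝ) ≤ inner ℝ (F z₁ - F z₂) (z₁ - z₂))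
    (hlip : ∀ z₁ ∈ Z, ∀ z₂ ∈ Z, ‖F z₁ - F z₂‖ ≤ L * ‖z₁ - z₂‖)
    (Zstar : Set V)
    (hZstar : Zstar = {zs ∈ Z | ∀ z ∈ Z, (0 : ℝ) ≤ inner ℝ (F zs) (z - zs)})
    (τ : ℝ) (hτ : 0 < τ)
    (z u zplus : V) (hz : z ∈ Z)
    (hu : u = projZ (z - τ • F z))
    (hzplus : zplus = projZ (z - τ • F u)) :
    ∀ zs ∈ Zstar,
      ‖zplus - zs‖ ^ 2
        ≤ ‖z - zs‖ ^ 2 - ‖z - u‖ ^ 2 - ‖u - zplus‖ ^ 2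
          + 2 * τ * L * ‖u - z‖ * ‖u - zplus‖ := by
  subst hZstar
  rintro zs ⟨hzsZ, hvi⟩
  have huZ : u ∈ Z := hu ▸ hprojmem _
  have hzplusZ : zplus ∈ Z := hzplus ▸ hprojmem _
  have hproj_zplus : inner ℝ ((z - τ • F u) - zplus) (zs - zplus) ≤ (0 : ℝ) :=
    hzplus ▸ hproj _ zs hzsZ
  have hproj_u : inner ℝ ((z - τ • F z) - u) (zplus - u) ≤ (0 : ℝ) :=
    hu ▸ hproj _ zplus hzplusZ
  have hminty : τ * inner ℝ (F u) (zs - u) ≤ 0 :=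
    mul_nonpos_of_nonneg_of_nonpos hτ.le
      (inner_apply_sub_nonpos_of_monotone_of_solution hmono hzsZ hvi huZ)
  have hlip_term : τ * inner ℝ (F u - F z) (u - zplus) ≤ τ * (L * ‖u - z‖ * ‖u - zplus‖) :=
    mul_le_mul_of_nonneg_left (inner_sub_apply_le_of_lipschitz hlip huZ hz _) hτ.le
  rw [norm_sub_sq_eq_extragradient τ z u zplus zs (F z) (F u)]
  linarith

/-- one-step decrease inequality for deterministic extragradient. -/
theorem stmt_11
    {V : Type*} [NormedAddCommGroup V] [InnerProductSpace ℝ V] [FiniteDimensional ℝ V]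
    (Z : Set V) (hZne : Z.Nonempty) (hZcpt : IsCompact Z) (hZconv : Convex ℝ Z)
    (projZ : V → V)
    (hprojmem : ∀ x, projZ x ∈ Z)
    (hproj : ∀ x, ∀ y ∈ Z, (inner ℝ (x - projZ x) (y - projZ x) : ℝ) ≤ 0)
    (F : V → V) (L : ℝ)
    (hmono : ∀ z₁ ∈ Z, ∀ z₂ ∈ Z, (0 : ℝ) ≤ inner ℝ (F z₁ - F z₂) (z₁ - z₂))
    (hlip : ∀ z₁ ∈ Z, ∀ z₂ ∈ Z, ‖F z₁ - F z₂‖ ≤ L * ‖z₁ - z₂‖)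
    (Zstar : Set V)
    (hZstar : Zstar = {zs ∈ Z | ∀ z ∈ Z, (0 : ℝ) ≤ inner ℝ (F zs) (z - zs)})
    (hZstarNe : Zstar.Nonempty)
    (τ : ℝ) (hτ : 0 < τ)
    (z u zplus : V) (hz : z ∈ Z)
    (hu : u = projZ (z - τ • F z))
    (hzplus : zplus = projZ (z - τ • F u)) :
    ∀ zs ∈ Zstar,
      ‖zplus - zs‖ ^ 2
        ≤ ‖z - zs‖ ^ 2 - ‖z - u‖ ^ 2 - ‖u - zplus‖ ^ 2
          + 2 * τ * L * ‖u - z‖ * ‖u - zplus‖ :=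
  stmt_11_general Z projZ hprojmem hproj F L hmono hlip Zstar hZstar τ hτ z u zplus hz hu hzplus
end

section
/- Assume F is L-Lipschitz on Z and 0 < τL < 1. Fix z ∈ Z and set u = Π_Z(z − τF(z)) and z⁺ = Π_Z(z − τF(u)). Then ‖z − z⁺‖ ≥ (1 − τL)·‖z − u‖. -/
/-!
The projection onto a convex set is nonexpansive, so the two projected points `u` and `z⁺`, whose
arguments differ by `τ (F z - F u)`, satisfy `‖z⁺ - u‖ ≤ τ L ‖z - u‖`. The triangle inequality
`‖z - u‖ ≤ ‖z - z⁺‖ + ‖z⁺ - u‖` then gives the bound.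
-/

section VariationalProjection

variable {V : Type*} [NormedAddCommGroup V] [InnerProductSpace ℝ V]
  {Z : Set V} {P : V → V}

/-- Firm nonexpansiveness: add the variational inequalities at `a` (tested with `P b`) and at `b`
(tested with `P a`). -/
lemma sq_norm_sub_le_inner_of_inner_sub_nonpos (hmem : ∀ x, P x ∈ Z)
    (hP : ∀ x, ∀ y ∈ Z, inner ℝ (x - P x) (y - P x) ≤ 0) (a b : V) :
    ‖P a - P b‖ ^ 2 ≤ inner ℝ (a - b) (P a - P b) := by
  have ha := hP a (P b) (hmem b)
  have hb := hP b (P a) (hmem a)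
  have hsplit : inner ℝ (a - b) (P a - P b) =
      ‖P a - P b‖ ^ 2 - inner ℝ (a - P a) (P b - P a) - inner ℝ (b - P b) (P a - P b) := by
    rw [← real_inner_self_eq_norm_sq]
    simp only [inner_sub_left, inner_sub_right]
    ring
  linarith

lemma norm_sub_le_of_inner_sub_nonpos (hmem : ∀ x, P x ∈ Z)
    (hP : ∀ x, ∀ y ∈ Z, inner ℝ (x - P x) (y - P x) ≤ 0) (a b : V) :
    ‖P a - P b‖ ≤ ‖a - b‖ := by
  have hfirm := sq_norm_sub_le_inner_of_inner_sub_nonpos hmem hP a b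
  have hcs := real_inner_le_norm (a - b) (P a - P b)
  by_contra! hlt
  nlinarith [norm_nonneg (a - b)]

end VariationalProjection

theorem stmt_12_general
    {V : Type*} [NormedAddCommGroup V] [InnerProductSpace ℝ V]
    (Z : Set V)
    (projZ : V → V)
    (hprojmem : ∀ x, projZ x ∈ Z)
    (hproj : ∀ x, ∀ y ∈ Z, (inner ℝ (x - projZ x) (y - projZ x) : ℝ) ≤ 0)
    (F : V → V) (L : ℝ)
    (hlip : ∀ z₁ ∈ Z, ∀ z₂ ∈ Z, ‖F z₁ - F z₂‖ ≤ L * ‖z₁ - z₂‖)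
    (τ : ℝ) (hτ0 : 0 < τ * L)
    (z u zplus : V) (hz : z ∈ Z)
    (hu : u = projZ (z - τ • F z))
    (hzplus : zplus = projZ (z - τ • F u)) :
    (1 - τ * L) * ‖z - u‖ ≤ ‖z - zplus‖ := by
  rcases eq_or_ne z u with rfl | hzu
  · simp
  have hFzu : ‖F z - F u‖ ≤ L * ‖z - u‖ := hlip z hz u (hu ▸ hprojmem _)
  have hzu_pos : 0 < ‖z - u‖ := norm_pos_iff.mpr (sub_ne_zero.mpr hzu)
  have hL : 0 ≤ L := nonneg_of_mul_nonneg_left ((norm_nonneg _).trans hFzu) hzu_pos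
  have hτ : 0 < τ := pos_of_mul_pos_left hτ0 hL
  have hstep : ‖zplus - u‖ ≤ τ * L * ‖z - u‖ :=
    calc ‖zplus - u‖ ≤ ‖(z - τ • F u) - (z - τ • F z)‖ := by
          rw [hzplus, hu]; exact norm_sub_le_of_inner_sub_nonpos hprojmem hproj _ _
      _ = τ * ‖F z - F u‖ := by
          rw [sub_sub_sub_cancel_left, ← smul_sub, norm_smul, Real.norm_of_nonneg hτ.le]
      _ ≤ τ * L * ‖z - u‖ := by rw [mul_assoc]; gcongr
  linarith [norm_sub_le_norm_sub_add_norm_sub z zplus u]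

/-- lower bound on the displacement of one extragradient step. -/
theorem stmt_12
    {V : Type*} [NormedAddCommGroup V] [InnerProductSpace ℝ V] [FiniteDimensional ℝ V]
    (Z : Set V) (hZne : Z.Nonempty) (hZcpt : IsCompact Z) (hZconv : Convex ℝ Z)
    (projZ : V → V)
    (hprojmem : ∀ x, projZ x ∈ Z)
    (hproj : ∀ x, ∀ y ∈ Z, (inner ℝ (x - projZ x) (y - projZ x) : ℝ) ≤ 0)
    (F : V → V) (L : ℝ)
    (hlip : ∀ z₁ ∈ Z, ∀ z₂ ∈ Z, ‖F z₁ - F z₂‖ ≤ L * ‖z₁ - z₂‖)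
    (τ : ℝ) (hτ0 : 0 < τ * L) (hτ1 : τ * L < 1)
    (z u zplus : V) (hz : z ∈ Z)
    (hu : u = projZ (z - τ • F z))
    (hzplus : zplus = projZ (z - τ • F u)) :
    (1 - τ * L) * ‖z - u‖ ≤ ‖z - zplus‖ :=
  stmt_12_general Z projZ hprojmem hproj F L hlip τ hτ0 z u zplus hz hu hzplus
end

section
/- Assume F is L-Lipschitz and monotone on Z, γ ∈ (0, 1), and τ = γ/L. Fix z ∈ Z and set u = Π_Z(z − τF(z)) and z⁺ = Π_Z(z − τF(u)). Then dist(z⁺, Z*)² ≤ dist(z, Z*)² − ((1 − γ)/2)·‖z − z⁺‖². -/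
open Metric

/-!
Let `w` be the point of `Z*` nearest to `z`. Both projection inequalities, together with
`⟪F u, w - u⟫ ≤ 0` (monotonicity plus `w ∈ Z*`), bound `‖z - w‖² - ‖z⁺ - w‖²` from below by
`‖z - u‖² + ‖u - z⁺‖² - 2τ⟪F u - F z, u - z⁺⟫`, and Lipschitz continuity with `τ L = γ` plus AM-GM
bound the last term by `γ (‖z - u‖² + ‖u - z⁺‖²)`. Finally `‖z - z⁺‖² ≤ 2 (‖z - u‖² + ‖u - z⁺‖²)`.
-/

section InnerProductSpace

variable {E : Type*} [NormedAddCommGroup E] [InnerProductSpace ℝ E]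

lemma inner_sub_le_of_inner_sub_smul_sub_nonpos {x g p y : E} {τ : ℝ}
    (h : inner ℝ (x - τ • g - p) (y - p) ≤ 0) :
    inner ℝ (x - p) (y - p) ≤ τ * inner ℝ g (y - p) := by
  rwa [sub_right_comm, inner_sub_left, real_inner_smul_left, sub_nonpos] at h

/-- `hz'` and `hu` are the variational inequalities of the projections `z' = Π(z - τ g₁)` and
`u = Π(z - τ g₀)`, tested at `w` and `z'`; in the extragradient method `g₀ = F z`, `g₁ = F u`. -/
lemma extragradient_norm_sub_sq_le {z u z' w g₀ g₁ : E} {τ γ : ℝ} (hτ : 0 ≤ τ) (hγ : 0 ≤ γ)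
    (hz' : inner ℝ (z - τ • g₁ - z') (w - z') ≤ 0)
    (hu : inner ℝ (z - τ • g₀ - u) (z' - u) ≤ 0)
    (hw : inner ℝ g₁ (w - u) ≤ 0)
    (hlip : τ * ‖g₁ - g₀‖ ≤ γ * ‖z - u‖) :
    ‖z' - w‖ ^ 2 ≤ ‖z - w‖ ^ 2 - (1 - γ) * (‖z - u‖ ^ 2 + ‖u - z'‖ ^ 2) := by
  replace hz' := inner_sub_le_of_inner_sub_smul_sub_nonpos hz'
  replace hu := inner_sub_le_of_inner_sub_smul_sub_nonpos hu
  rw [← neg_sub u z', inner_neg_right, inner_neg_right, mul_neg] at hu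
  have hw_split : inner ℝ g₁ (w - z') = inner ℝ g₁ (w - u) + inner ℝ g₁ (u - z') := by
    rw [← inner_add_right, sub_add_sub_cancel]
  rw [hw_split, mul_add] at hz'
  have hexp_w : ‖z - w‖ ^ 2 = ‖z - z'‖ ^ 2 - 2 * inner ℝ (z - z') (w - z') + ‖w - z'‖ ^ 2 := by
    rw [← norm_sub_sq_real, sub_sub_sub_cancel_right]
  have hexp_u : ‖z - z'‖ ^ 2 = ‖z - u‖ ^ 2 + 2 * inner ℝ (z - u) (u - z') + ‖u - z'‖ ^ 2 := by
    rw [← norm_add_sq_real, sub_add_sub_cancel]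
  have hcs : τ * inner ℝ g₁ (u - z') - τ * inner ℝ g₀ (u - z') ≤ γ * (‖z - u‖ * ‖u - z'‖) :=
    calc τ * inner ℝ g₁ (u - z') - τ * inner ℝ g₀ (u - z')
        = τ * inner ℝ (g₁ - g₀) (u - z') := by rw [inner_sub_left, mul_sub]
      _ ≤ τ * (‖g₁ - g₀‖ * ‖u - z'‖) := mul_le_mul_of_nonneg_left (real_inner_le_norm _ _) hτ
      _ = τ * ‖g₁ - g₀‖ * ‖u - z'‖ := by ring
      _ ≤ γ * ‖z - u‖ * ‖u - z'‖ := mul_le_mul_of_nonneg_right hlip (norm_nonneg _)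
      _ = γ * (‖z - u‖ * ‖u - z'‖) := by ring
  have hamgm : γ * (2 * ‖z - u‖ * ‖u - z'‖) ≤ γ * (‖z - u‖ ^ 2 + ‖u - z'‖ ^ 2) :=
    mul_le_mul_of_nonneg_left (two_mul_le_add_sq _ _) hγ
  have hτw : τ * inner ℝ g₁ (w - u) ≤ 0 := mul_nonpos_of_nonneg_of_nonpos hτ hw
  rw [norm_sub_rev z' w]
  linarith

end InnerProductSpace

theorem stmt_13_general
    {V : Type*} [NormedAddCommGroup V] [InnerProductSpace ℝ V]
    (Z : Set V) (hZcpt : IsCompact Z)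
    (projZ : V → V)
    (hprojmem : ∀ x, projZ x ∈ Z)
    (hproj : ∀ x, ∀ y ∈ Z, (inner ℝ (x - projZ x) (y - projZ x) : ℝ) ≤ 0)
    (F : V → V) (L : ℝ) (hL : 0 < L)
    (hmono : ∀ z₁ ∈ Z, ∀ z₂ ∈ Z, (0 : ℝ) ≤ inner ℝ (F z₁ - F z₂) (z₁ - z₂))
    (hlip : ∀ z₁ ∈ Z, ∀ z₂ ∈ Z, ‖F z₁ - F z₂‖ ≤ L * ‖z₁ - z₂‖)
    (Zstar : Set V)
    (hZstar : Zstar = {zs ∈ Z | ∀ z ∈ Z, (0 : ℝ) ≤ inner ℝ (F zs) (z - zs)})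
    (hZstarNe : Zstar.Nonempty) (hZstarClosed : IsClosed Zstar)
    (γ τ : ℝ) (hγ0 : 0 < γ) (hγ1 : γ < 1) (hτ : τ = γ / L)
    (z u zplus : V) (hz : z ∈ Z)
    (hu : u = projZ (z - τ • F z))
    (hzplus : zplus = projZ (z - τ • F u)) :
    infDist zplus Zstar ^ 2
      ≤ infDist z Zstar ^ 2 - ((1 - γ) / 2) * ‖z - zplus‖ ^ 2 := by
  have huZ : u ∈ Z := hu ▸ hprojmem _
  have hsub : Zstar ⊆ Z := by rw [hZstar]; exact fun _ hx => hx.1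
  obtain ⟨w, hw, hzw⟩ :=
    (hZcpt.of_isClosed_subset hZstarClosed hsub).exists_infDist_eq_dist hZstarNe z
  have hwZ : w ∈ Z := hsub hw
  have hwsol : 0 ≤ inner ℝ (F w) (u - w) := (hZstar ▸ hw).2 u huZ
  have hFu : inner ℝ (F u) (w - u) ≤ 0 := by
    have := hmono u huZ w hwZ
    rw [inner_sub_left] at this
    rw [← neg_sub u w, inner_neg_right]
    linarith
  have hτlip : τ * ‖F u - F z‖ ≤ γ * ‖z - u‖ := by
    rw [hτ, div_mul_eq_mul_div, div_le_iff₀ hL, norm_sub_rev z u, mul_right_comm, mul_assoc]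
    exact mul_le_mul_of_nonneg_left (hlip u huZ z hz) hγ0.le
  have hstep := extragradient_norm_sub_sq_le (hτ ▸ div_nonneg hγ0.le hL.le) hγ0.le
    (hzplus ▸ hproj _ w hwZ) (hu ▸ hproj _ zplus (hzplus ▸ hprojmem _)) hFu hτlip
  have htri : ‖z - zplus‖ ^ 2 ≤ 2 * (‖z - u‖ ^ 2 + ‖u - zplus‖ ^ 2) :=
    (pow_le_pow_left₀ (norm_nonneg _) (norm_sub_le_norm_sub_add_norm_sub z u zplus) 2).trans
      add_sq_le
  calc infDist zplus Zstar ^ 2 ≤ ‖zplus - w‖ ^ 2 := by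
        rw [← dist_eq_norm]; exact pow_le_pow_left₀ infDist_nonneg (infDist_le_dist_of_mem hw) 2
    _ ≤ infDist z Zstar ^ 2 - ((1 - γ) / 2) * ‖z - zplus‖ ^ 2 := by
        rw [hzw, dist_eq_norm]
        linarith [mul_le_mul_of_nonneg_left htri (by linarith : 0 ≤ (1 - γ) / 2)]

/-- one-step distance decrease for deterministic extragradient
with stepsize `τ = γ/L`. -/
theorem stmt_13
    {V : Type*} [NormedAddCommGroup V] [InnerProductSpace ℝ V] [FiniteDimensional ℝ V]
    (Z : Set V) (hZne : Z.Nonempty) (hZcpt : IsCompact Z) (hZconv : Convex ℝ Z)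
    (projZ : V → V)
    (hprojmem : ∀ x, projZ x ∈ Z)
    (hproj : ∀ x, ∀ y ∈ Z, (inner ℝ (x - projZ x) (y - projZ x) : ℝ) ≤ 0)
    (F : V → V) (L : ℝ) (hL : 0 < L)
    (hmono : ∀ z₁ ∈ Z, ∀ z₂ ∈ Z, (0 : ℝ) ≤ inner ℝ (F z₁ - F z₂) (z₁ - z₂))
    (hlip : ∀ z₁ ∈ Z, ∀ z₂ ∈ Z, ‖F z₁ - F z₂‖ ≤ L * ‖z₁ - z₂‖)
    (Zstar : Set V)
    (hZstar : Zstar = {zs ∈ Z | ∀ z ∈ Z, (0 : ℝ) ≤ inner ℝ (F zs) (z - zs)})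
    (hZstarNe : Zstar.Nonempty) (hZstarClosed : IsClosed Zstar)
    (γ τ : ℝ) (hγ0 : 0 < γ) (hγ1 : γ < 1) (hτ : τ = γ / L)
    (z u zplus : V) (hz : z ∈ Z)
    (hu : u = projZ (z - τ • F z))
    (hzplus : zplus = projZ (z - τ • F u)) :
    infDist zplus Zstar ^ 2
      ≤ infDist z Zstar ^ 2 - ((1 - γ) / 2) * ‖z - zplus‖ ^ 2 :=
  stmt_13_general Z hZcpt projZ hprojmem hproj F L hL hmono hlip Zstar hZstar hZstarNe hZstarClosed
    γ τ hγ0 hγ1 hτ z u zplus hz hu hzplus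
end

section
/- Let X = {x ∈ ℝ² : 0 ≤ x₁ ≤ 1, 0 ≤ x₂ ≤ 1, x₁ + x₂ ≤ 3/2} and F(x) = ((x₁ + x₂)/2 − 2, (x₁ + x₂)/2 − 2). Then the solution set of the variational inequality, {x ∈ X : ⟪F(x), y − x⟫ ≥ 0 for all y ∈ X}, equals {x ∈ ℝ² : 1/2 ≤ x₁ ≤ 1 and x₁ + x₂ = 3/2}. -/
/-- The feasible polytope `X = {x : 0 ≤ x₁ ≤ 1, 0 ≤ x₂ ≤ 1, x₁ + x₂ ≤ 3/2}`. -/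
def Xset : Set (EuclideanSpace ℝ (Fin 2)) :=
  {x | 0 ≤ x 0 ∧ x 0 ≤ 1 ∧ 0 ≤ x 1 ∧ x 1 ≤ 1 ∧ x 0 + x 1 ≤ 3 / 2}

/-- The monotone affine operator `F(x) = ((x₁+x₂)/2 − 2, (x₁+x₂)/2 − 2)`. -/
noncomputable def Fmap (x : EuclideanSpace ℝ (Fin 2)) : EuclideanSpace ℝ (Fin 2) :=
  (WithLp.equiv 2 (Fin 2 → ℝ)).symm ![(x 0 + x 1) / 2 - 2, (x 0 + x 1) / 2 - 2]

/-!
`F x` is the negative multiple `(s x / 2 - 2) • (1, 1)` of a fixed vector, where `s x = x₁ + x₂`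
and `s ≤ 3/2` on `X`. Hence `⟪F x, y - x⟫ ≥ 0` just says `s y ≤ s x`, so the solutions of the
variational inequality are the maximisers of `s` on `X`. The maximum `3/2` is attained (at
`(1/2, 1)`), and the points of `X` on the line `s = 3/2` are those with `1/2 ≤ x₁ ≤ 1`.
-/

def coordSum (x : EuclideanSpace ℝ (Fin 2)) : ℝ := x 0 + x 1

lemma inner_Fmap_sub (x y : EuclideanSpace ℝ (Fin 2)) :
    inner ℝ (Fmap x) (y - x) = (coordSum x / 2 - 2) * (coordSum y - coordSum x) := by
  simp only [Fmap, WithLp.equiv_symm_apply, PiLp.inner_apply, PiLp.sub_apply, RCLike.inner_apply,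
    Real.ringHom_apply, Fin.sum_univ_two, Matrix.cons_val_zero, Matrix.cons_val_one,
    Matrix.cons_val_fin_one, coordSum]
  ring

lemma coordSum_le_of_mem_Xset {x : EuclideanSpace ℝ (Fin 2)} (hx : x ∈ Xset) :
    coordSum x ≤ 3 / 2 :=
  hx.2.2.2.2

lemma nonneg_mul_sub_iff_of_neg {c a b : ℝ} (hc : c < 0) : 0 ≤ c * (b - a) ↔ b ≤ a := by
  rw [show c * (b - a) = -c * (a - b) by ring, mul_nonneg_iff_of_pos_left (neg_pos.2 hc),
    sub_nonneg]

lemma vi_Fmap_iff_isMaxOn {x : EuclideanSpace ℝ (Fin 2)} (hx : x ∈ Xset) :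
    (∀ y ∈ Xset, (0 : ℝ) ≤ inner ℝ (Fmap x) (y - x)) ↔ IsMaxOn coordSum Xset x := by
  have hneg : coordSum x / 2 - 2 < 0 := by linarith [coordSum_le_of_mem_Xset hx]
  simp only [isMaxOn_iff, inner_Fmap_sub, nonneg_mul_sub_iff_of_neg hneg]

lemma isMaxOn_coordSum_Xset_iff {x : EuclideanSpace ℝ (Fin 2)} (hx : x ∈ Xset) :
    IsMaxOn coordSum Xset x ↔ coordSum x = 3 / 2 := by
  have hmem : !₂[(1 / 2 : ℝ), 1] ∈ Xset := by
    norm_num [Xset]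
  have hsum : coordSum !₂[(1 / 2 : ℝ), 1] = 3 / 2 := by
    norm_num [coordSum]
  rw [isMaxOn_iff]
  constructor
  · intro h
    exact le_antisymm (coordSum_le_of_mem_Xset hx) (hsum ▸ h _ hmem)
  · intro h y hy
    exact h ▸ coordSum_le_of_mem_Xset hy

/-- the solution set of the VI on `X` with operator `F`. -/
theorem stmt_15 :
    {x ∈ Xset | ∀ y ∈ Xset, (0 : ℝ) ≤ inner ℝ (Fmap x) (y - x)}
      = {x : EuclideanSpace ℝ (Fin 2) |
          1 / 2 ≤ x 0 ∧ x 0 ≤ 1 ∧ x 0 + x 1 = 3 / 2} := by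
  ext x
  simp only [Set.mem_ofPred_eq]
  constructor
  · rintro ⟨hx, hvi⟩
    have hs : x 0 + x 1 = 3 / 2 :=
      (isMaxOn_coordSum_Xset_iff hx).1 ((vi_Fmap_iff_isMaxOn hx).1 hvi)
    obtain ⟨-, hx0, -, hx1, -⟩ := hx
    exact ⟨by linarith, hx0, hs⟩
  · rintro ⟨h0, h1, hs⟩
    have hx : x ∈ Xset := ⟨by linarith, h1, by linarith, by linarith, hs.le⟩
    exact ⟨hx, (vi_Fmap_iff_isMaxOn hx).2 ((isMaxOn_coordSum_Xset_iff hx).2 hs)⟩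
end

section
/- Let X = {x ∈ ℝ² : 0 ≤ x₁ ≤ 1, 0 ≤ x₂ ≤ 1, x₁ + x₂ ≤ 3/2} and X* = {x ∈ ℝ² : 1/2 ≤ x₁ ≤ 1, x₁ + x₂ = 3/2}. Then ⋂_{x*∈X*} [T_X(x*) ∩ N_{X*}(x*)]° = ℝ²₊, the nonnegative orthant {x ∈ ℝ² : x₁ ≥ 0, x₂ ≥ 0}. -/
/-- Polar of a set: `S° = {v : ⟪v, s⟫ ≤ 0 for all s ∈ S}`. -/
def polarSet {V : Type*} [NormedAddCommGroup V] [InnerProductSpace ℝ V]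
    (S : Set V) : Set V :=
  {v | ∀ s ∈ S, (inner ℝ v s : ℝ) ≤ 0}

/-- Normal cone of a convex set `C` at `c`. -/
def normalConeVI {V : Type*} [NormedAddCommGroup V] [InnerProductSpace ℝ V]
    (C : Set V) (c : V) : Set V :=
  {v | ∀ w ∈ C, (inner ℝ v (w - c) : ℝ) ≤ 0}

/-- Tangent cone of a convex set `C` at `c`, as the polar of the normal cone. -/
def tangentConeVI {V : Type*} [NormedAddCommGroup V] [InnerProductSpace ℝ V]
    (C : Set V) (c : V) : Set V :=
  polarSet (normalConeVI C c)

/-- The solution set `X* = {x : 1/2 ≤ x₁ ≤ 1, x₁ + x₂ = 3/2}`. -/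
def XstarSet : Set (EuclideanSpace ℝ (Fin 2)) :=
  {x | 1 / 2 ≤ x 0 ∧ x 0 ≤ 1 ∧ x 0 + x 1 = 3 / 2}

/-! At every `x* ∈ X*` the vector `(1, 1)` is normal to `X`, so tangent directions satisfy
`v₁ + v₂ ≤ 0`; normality to the segment `X*` forces `v₁ ≤ v₂` unless `x*` is the endpoint
`(1, 1/2)`, where `(1, 0)` is normal to `X` and gives `v₁ ≤ 0` directly (symmetrically for `v₂`).
Hence every cone `T_X(x*) ∩ N_{X*}(x*)` lies in the nonpositive orthant, whose polar contains
`ℝ²₊`. Conversely `-e₁` and `-e₂` lie in the cones at the two endpoints of `X*`, which cuts the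
intersection of the polars down to `ℝ²₊`. -/

open scoped RealInnerProductSpace

section Cones

variable {V : Type*} [NormedAddCommGroup V] [InnerProductSpace ℝ V] {C : Set V} {a c w : V}

lemma mem_normalConeVI_of_forall_inner_le {b : ℝ} (hC : ∀ w ∈ C, ⟪a, w⟫ ≤ b) (hc : ⟪a, c⟫ = b) :
    a ∈ normalConeVI C c := fun w hw => by
  rw [inner_sub_right, hc]
  linarith [hC w hw]

lemma smul_sub_mem_tangentConeVI {t : ℝ} (ht : 0 ≤ t) (hw : w ∈ C) :
    t • (w - c) ∈ tangentConeVI C c := fun n hn => by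
  rw [real_inner_comm, inner_smul_right]
  exact mul_nonpos_of_nonneg_of_nonpos ht (hn w hw)

end Cones

lemma real_inner_fin_two (v w : EuclideanSpace ℝ (Fin 2)) : ⟪v, w⟫ = v 0 * w 0 + v 1 * w 1 := by
  simp [PiLp.inner_apply, Fin.sum_univ_two, mul_comm]

lemma coord_nonpos_of_mem_tangentConeVI_inter_normalConeVI {xs v : EuclideanSpace ℝ (Fin 2)}
    (hxs : xs ∈ XstarSet) (hv : v ∈ tangentConeVI Xset xs ∩ normalConeVI XstarSet xs) :
    v 0 ≤ 0 ∧ v 1 ≤ 0 := by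
  obtain ⟨hlo, hhi, hsum⟩ := hxs
  obtain ⟨hvT, hvN⟩ := hv
  have tangent_inner_nonpos (a : EuclideanSpace ℝ (Fin 2)) (b : ℝ) (hX : ∀ w ∈ Xset, ⟪a, w⟫ ≤ b)
      (hxs : ⟪a, xs⟫ = b) : ⟪v, a⟫ ≤ 0 :=
    hvT a (mem_normalConeVI_of_forall_inner_le hX hxs)
  have hdiag : v 0 + v 1 ≤ 0 := by
    have := tangent_inner_nonpos !₂[1, 1] (3 / 2)
      (fun w ⟨_, _, _, _, h⟩ => by simp [real_inner_fin_two]; linarith)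
      (by simp [real_inner_fin_two]; linarith)
    simpa [real_inner_fin_two] using this
  have hright := hvN !₂[1, 1 / 2] ⟨by norm_num, by norm_num, by norm_num⟩
  have hleft := hvN !₂[1 / 2, 1] ⟨by norm_num, by norm_num, by norm_num⟩
  simp only [real_inner_fin_two, PiLp.sub_apply, Matrix.cons_val_zero, Matrix.cons_val_one]
    at hright hleft
  constructor
  · rcases hhi.lt_or_eq with hlt | heq
    · nlinarith
    · have := tangent_inner_nonpos !₂[1, 0] 1
        (fun w ⟨_, h, _, _, _⟩ => by simp [real_inner_fin_two]; linarith)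
        (by simp [real_inner_fin_two, heq])
      simpa [real_inner_fin_two] using this
  · rcases hlo.lt_or_eq with hlt | heq
    · nlinarith
    · have := tangent_inner_nonpos !₂[0, 1] 1
        (fun w ⟨_, _, _, h, _⟩ => by simp [real_inner_fin_two]; linarith)
        (by simp [real_inner_fin_two]; linarith)
      simpa [real_inner_fin_two] using this

lemma neg_single_zero_mem_tangentConeVI_inter_normalConeVI :
    !₂[-1, 0] ∈ tangentConeVI Xset !₂[1 / 2, 1] ∩ normalConeVI XstarSet !₂[1 / 2, 1] := by
  refine ⟨?_, mem_normalConeVI_of_forall_inner_le (b := -(1 / 2))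
    (fun w ⟨h, _, _⟩ => by simp [real_inner_fin_two]; linarith) (by simp [real_inner_fin_two])⟩
  have hdir : (!₂[-1, 0] : EuclideanSpace ℝ (Fin 2)) = (2 : ℝ) • (!₂[0, 1] - !₂[1 / 2, 1]) := by
    ext i; fin_cases i <;> norm_num
  rw [hdir]
  exact smul_sub_mem_tangentConeVI zero_le_two
    ⟨by norm_num, by norm_num, by norm_num, by norm_num, by norm_num⟩

lemma neg_single_one_mem_tangentConeVI_inter_normalConeVI :
    !₂[0, -1] ∈ tangentConeVI Xset !₂[1, 1 / 2] ∩ normalConeVI XstarSet !₂[1, 1 / 2] := by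
  refine ⟨?_, mem_normalConeVI_of_forall_inner_le (b := -(1 / 2))
    (fun w ⟨_, _, h⟩ => by simp [real_inner_fin_two]; linarith) (by simp [real_inner_fin_two])⟩
  have hdir : (!₂[0, -1] : EuclideanSpace ℝ (Fin 2)) = (2 : ℝ) • (!₂[1, 0] - !₂[1, 1 / 2]) := by
    ext i; fin_cases i <;> norm_num
  rw [hdir]
  exact smul_sub_mem_tangentConeVI zero_le_two
    ⟨by norm_num, by norm_num, by norm_num, by norm_num, by norm_num⟩

/-- the weak-sharpness cone computation for the example. -/
theorem stmt_16 :
    (⋂ xs ∈ XstarSet, polarSet (tangentConeVI Xset xs ∩ normalConeVI XstarSet xs))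
      = {x : EuclideanSpace ℝ (Fin 2) | 0 ≤ x 0 ∧ 0 ≤ x 1} := by
  ext x
  simp only [Set.mem_iInter, Set.mem_ofPred_eq]
  constructor
  · intro hx
    have h0 := hx _ ⟨by norm_num, by norm_num, by norm_num⟩ _
      neg_single_zero_mem_tangentConeVI_inter_normalConeVI
    have h1 := hx _ ⟨by norm_num, by norm_num, by norm_num⟩ _
      neg_single_one_mem_tangentConeVI_inter_normalConeVI
    simp only [real_inner_fin_two] at h0 h1
    exact ⟨by simpa using h0, by simpa using h1⟩
  · rintro ⟨hx0, hx1⟩ xs hxs v hv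
    obtain ⟨hv0, hv1⟩ := coord_nonpos_of_mem_tangentConeVI_inter_normalConeVI hxs hv
    rw [real_inner_fin_two]
    exact add_nonpos (mul_nonpos_of_nonneg_of_nonpos hx0 hv0)
      (mul_nonpos_of_nonneg_of_nonpos hx1 hv1)
end
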